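/- arXiv:2212.06737 — 10 statements merged into one kernel-verified Lean document; each statement's English description precedes it below -/
import Mathlib

section
/- Let K and L be a pair of orthogonal Latin squares of order d with entries in {1,...,d}. Then the matrix P on ℂ^d ⊗ ℂ^d defined by P = Σ_{i,j} |i,j⟩⟨K_{ij}, L_{ij}| is a 2-unitary matrix: P, P^R, and P^Γ are all unitary. -/
open Matrix

noncomputable def realign {d : ℕ} (U : Matrix (Fin d × Fin d) (Fin d × Fin d) ℂ) :
    Matrix (Fin d × Fin d) (Fin d × Fin d) ℂ :=
  Matrix.of fun x y => U (x.1, y.1) (x.2, y.2)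

noncomputable def ptrans {d : ℕ} (U : Matrix (Fin d × Fin d) (Fin d × Fin d) ℂ) :
    Matrix (Fin d × Fin d) (Fin d × Fin d) ℂ :=
  Matrix.of fun x y => U (x.1, y.2) (y.1, x.2)

def IsUnitary {n : Type*} [Fintype n] [DecidableEq n] (A : Matrix n n ℂ) : Prop :=
  A ∈ Matrix.unitaryGroup n ℂ

def Is2Unitary {d : ℕ} (U : Matrix (Fin d × Fin d) (Fin d × Fin d) ℂ) : Prop :=
  IsUnitary U ∧ IsUnitary (realign U) ∧ IsUnitary (ptrans U)

/-- A Latin square of order `d`: each symbol appears once in each row and column. -/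
def IsLatinSquare {d : ℕ} (K : Fin d → Fin d → Fin d) : Prop :=
  (∀ i, Function.Bijective (K i)) ∧ (∀ j, Function.Bijective fun i => K i j)

/-- Orthogonality of two Latin squares: the `d²` pairs are all distinct. -/
def AreOrthogonal {d : ℕ} (K L : Fin d → Fin d → Fin d) : Prop :=
  Function.Injective fun p : Fin d × Fin d => (K p.1 p.2, L p.1 p.2)

lemma perm_unitary {n : Type*} [Fintype n] [DecidableEq n] (f : n ≃ n)
    (A : Matrix n n ℂ) (hA : ∀ x y, A x y = if y = f x then 1 else 0) :
    A ∈ Matrix.unitaryGroup n ℂ := by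
  rw [Matrix.mem_unitaryGroup_iff]
  ext x z
  simp only [Matrix.mul_apply, Matrix.star_apply, hA, apply_ite (starRingEnd ℂ), _root_.map_one, _root_.map_zero, ite_mul, one_mul, zero_mul, Matrix.one_apply]
  rw [Finset.sum_ite_eq' Finset.univ (f x)]
  simp [EmbeddingLike.apply_eq_iff_eq]

/-- The matrix `P = Σ_{i,j} |i,j⟩⟨K_{ij}, L_{ij}|` built from orthogonal Latin squares
is 2-unitary. -/
theorem ols_gives_two_unitary {d : ℕ} (K L : Fin d → Fin d → Fin d)
    (hK : IsLatinSquare K) (hL : IsLatinSquare L) (hKL : AreOrthogonal K L) :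
    Is2Unitary (Matrix.of fun x y : Fin d × Fin d =>
      if K x.1 x.2 = y.1 ∧ L x.1 x.2 = y.2 then (1 : ℂ) else 0) := by
  -- row equivs of K and L
  let kR : Fin d → Fin d ≃ Fin d := fun i => Equiv.ofBijective (K i) (hK.1 i)
  let lR : Fin d → Fin d ≃ Fin d := fun i => Equiv.ofBijective (L i) (hL.1 i)
  refine ⟨?_, ?_, ?_⟩
  · -- P itself
    have hb : Function.Bijective (fun p : Fin d × Fin d => (K p.1 p.2, L p.1 p.2)) :=
      Finite.injective_iff_bijective.mp hKL
    refine perm_unitary (Equiv.ofBijective _ hb) _ ?_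
    intro x y
    simp only [Matrix.of_apply, Equiv.ofBijective_apply, Prod.ext_iff]
    exact if_congr (by tauto) rfl rfl
  · -- realign
    have hinj : Function.Injective
        (fun p : Fin d × Fin d => ((kR p.1).symm p.2, L p.1 ((kR p.1).symm p.2))) := by
      rintro ⟨a1, a2⟩ ⟨b1, b2⟩ h
      simp only [Prod.mk.injEq] at h
      obtain ⟨h1, h2⟩ := h
      rw [h1] at h2
      have ha : a1 = b1 := (hL.2 ((kR b1).symm b2)).1 h2
      subst ha
      have hb : a2 = b2 := (kR a1).symm.injective h1
      rw [hb]
    refine perm_unitary (Equiv.ofBijective _ (Finite.injective_iff_bijective.mp hinj)) _ ?_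
    intro x y
    show (if K x.1 y.1 = x.2 ∧ L x.1 y.1 = y.2 then (1:ℂ) else 0) = _
    simp only [Equiv.ofBijective_apply, Prod.ext_iff]
    refine if_congr ?_ rfl rfl
    constructor
    · rintro ⟨h1, h2⟩
      have : (kR x.1).symm x.2 = y.1 := by
        rw [← h1]; simp [kR]
      exact ⟨this.symm, by rw [this, h2]⟩
    · rintro ⟨h1, h2⟩
      rw [h1, h2]
      exact ⟨(kR x.1).apply_symm_apply x.2, rfl⟩
  · -- ptrans
    have hinj : Function.Injective
        (fun p : Fin d × Fin d => (K p.1 ((lR p.1).symm p.2), (lR p.1).symm p.2)) := by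
      rintro ⟨a1, a2⟩ ⟨b1, b2⟩ h
      simp only [Prod.mk.injEq] at h
      obtain ⟨h1, h2⟩ := h
      rw [h2] at h1
      have ha : a1 = b1 := (hK.2 ((lR b1).symm b2)).1 h1
      subst ha
      have hb : a2 = b2 := (lR a1).symm.injective h2
      rw [hb]
    refine perm_unitary (Equiv.ofBijective _ (Finite.injective_iff_bijective.mp hinj)) _ ?_
    intro x y
    show (if K x.1 y.2 = y.1 ∧ L x.1 y.2 = x.2 then (1:ℂ) else 0) = _
    simp only [Equiv.ofBijective_apply, Prod.ext_iff]
    refine if_congr ?_ rfl rfl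
    constructor
    · rintro ⟨h1, h2⟩
      have : (lR x.1).symm x.2 = y.2 := by
        rw [← h2]; simp [lR]
      exact ⟨by rw [this, h1], this.symm⟩
    · rintro ⟨h1, h2⟩
      rw [h1, h2]
      exact ⟨rfl, (lR x.1).apply_symm_apply x.2⟩
end

section
/- Let K and L be a pair of orthogonal Latin squares of order d and let |ψ⟩ = (1/d) Σ_{i,j} |i⟩|j⟩|K_{ij}⟩|L_{ij}⟩ be the corresponding four-qudit state. Then every reduced density matrix of |ψ⟩⟨ψ| obtained by tracing out any two of the four parties equals (1/d²) times the identity on ℂ^d ⊗ ℂ^d; i.e., |ψ⟩ is an AME(4,d) state. -/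
open Matrix Finset

local notation "conj" => starRingEnd ℂ

lemma double_sum_pos {d : ℕ} (v : ℂ) (P : Fin d → Fin d → Prop) [∀ x y, Decidable (P x y)]
    (x0 y0 : Fin d) (h : ∀ x y, P x y ↔ x = x0 ∧ y = y0) :
    (∑ x, ∑ y, if P x y then v else 0) = v := by
  simp [h, ite_and]

lemma double_sum_neg {d : ℕ} (v : ℂ) (P : Fin d → Fin d → Prop) [∀ x y, Decidable (P x y)]
    (h : ∀ x y, ¬ P x y) :
    (∑ x, ∑ y, if P x y then v else 0) = 0 := by
  simp [h]

lemma bij_eq_iff {α β : Type*} {f : α → β} (hf : Function.Bijective f) (y : β) (x : α) :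
    f x = y ↔ x = (Equiv.ofBijective f hf).symm y := by
  rw [Equiv.eq_symm_apply, Equiv.ofBijective_apply]

/-- The four-qudit state built from a pair of orthogonal Latin squares is AME(4,d):
every two-party reduced density matrix is maximally mixed. -/
theorem ols_state_is_AME {d : ℕ} (hd : 0 < d) (K L : Fin d → Fin d → Fin d)
    (hK : IsLatinSquare K) (hL : IsLatinSquare L) (hKL : AreOrthogonal K L)
    (ψ : Fin d → Fin d → Fin d → Fin d → ℂ)
    (hψ : ∀ i j k l, ψ i j k l =
      if K i j = k ∧ L i j = l then (1 / (d : ℂ)) else 0) :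
    -- reduction to parties {1,2}
    (∀ a b a' b', (∑ c, ∑ e, ψ a b c e * conj (ψ a' b' c e)) =
      if a = a' ∧ b = b' then 1 / ((d : ℂ)^2) else 0) ∧
    -- reduction to parties {1,3}
    (∀ a c a' c', (∑ b, ∑ e, ψ a b c e * conj (ψ a' b c' e)) =
      if a = a' ∧ c = c' then 1 / ((d : ℂ)^2) else 0) ∧
    -- reduction to parties {1,4}
    (∀ a e a' e', (∑ b, ∑ c, ψ a b c e * conj (ψ a' b c e')) =
      if a = a' ∧ e = e' then 1 / ((d : ℂ)^2) else 0) ∧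
    -- reduction to parties {2,3}
    (∀ b c b' c', (∑ a, ∑ e, ψ a b c e * conj (ψ a b' c' e)) =
      if b = b' ∧ c = c' then 1 / ((d : ℂ)^2) else 0) ∧
    -- reduction to parties {2,4}
    (∀ b e b' e', (∑ a, ∑ c, ψ a b c e * conj (ψ a b' c e')) =
      if b = b' ∧ e = e' then 1 / ((d : ℂ)^2) else 0) ∧
    -- reduction to parties {3,4}
    (∀ c e c' e', (∑ a, ∑ b, ψ a b c e * conj (ψ a b c' e')) =
      if c = c' ∧ e = e' then 1 / ((d : ℂ)^2) else 0) := by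
  have hconj : conj (1/(d:ℂ)) = 1/(d:ℂ) := by simp
  have hterm : ∀ i j k l i' j' k' l', ψ i j k l * conj (ψ i' j' k' l') =
      if (K i j = k ∧ L i j = l) ∧ (K i' j' = k' ∧ L i' j' = l') then 1/((d:ℂ)^2) else 0 := by
    intro i j k l i' j' k' l'
    rw [hψ, hψ]
    by_cases h1 : K i j = k ∧ L i j = l <;> by_cases h2 : K i' j' = k' ∧ L i' j' = l' <;>
      simp [h1, h2, hconj] <;> ring
  refine ⟨?_, ?_, ?_, ?_, ?_, ?_⟩
  · -- parties {1,2}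
    intro a b a' b'
    simp only [hterm]
    by_cases h : a = a' ∧ b = b'
    · obtain ⟨rfl, rfl⟩ := h
      rw [if_pos ⟨rfl, rfl⟩]
      refine double_sum_pos _ _ (K a b) (L a b) fun c e => ?_
      constructor
      · rintro ⟨⟨h1, h2⟩, -⟩; exact ⟨h1.symm, h2.symm⟩
      · rintro ⟨rfl, rfl⟩; exact ⟨⟨rfl, rfl⟩, rfl, rfl⟩
    · rw [if_neg h]
      refine double_sum_neg _ _ fun c e => ?_
      rintro ⟨⟨h1, h2⟩, h3, h4⟩
      have h5 : ((a, b) : Fin d × Fin d) = (a', b') := hKL (by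
        show (K a b, L a b) = (K a' b', L a' b')
        rw [h1, h2, h3, h4])
      rw [Prod.mk.injEq] at h5
      exact h h5
  · -- parties {1,3}
    intro a c a' c'
    simp only [hterm]
    by_cases h : a = a' ∧ c = c'
    · obtain ⟨rfl, rfl⟩ := h
      rw [if_pos ⟨rfl, rfl⟩]
      set b0 := (Equiv.ofBijective (K a) (hK.1 a)).symm c with hb0def
      have hb0 : K a b0 = c := (Equiv.ofBijective (K a) (hK.1 a)).apply_symm_apply c
      refine double_sum_pos _ _ b0 (L a b0) fun b e => ?_
      constructor
      · rintro ⟨⟨h1, h2⟩, -⟩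
        have hb : b = b0 := (bij_eq_iff (hK.1 a) c b).mp h1
        subst hb; exact ⟨rfl, h2.symm⟩
      · rintro ⟨rfl, rfl⟩; exact ⟨⟨hb0, rfl⟩, hb0, rfl⟩
    · rw [if_neg h]
      refine double_sum_neg _ _ fun b e => ?_
      rintro ⟨⟨h1, h2⟩, h3, h4⟩
      have ha : a = a' := (hL.2 b).1 (h2.trans h4.symm)
      subst ha
      exact h ⟨rfl, h1.symm.trans h3⟩
  · -- parties {1,4}
    intro a e a' e'
    simp only [hterm]
    by_cases h : a = a' ∧ e = e'
    · obtain ⟨rfl, rfl⟩ := h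
      rw [if_pos ⟨rfl, rfl⟩]
      set b0 := (Equiv.ofBijective (L a) (hL.1 a)).symm e with hb0def
      have hb0 : L a b0 = e := (Equiv.ofBijective (L a) (hL.1 a)).apply_symm_apply e
      refine double_sum_pos _ _ b0 (K a b0) fun b c => ?_
      constructor
      · rintro ⟨⟨h1, h2⟩, -⟩
        have hb : b = b0 := (bij_eq_iff (hL.1 a) e b).mp h2
        subst hb; exact ⟨rfl, h1.symm⟩
      · rintro ⟨rfl, rfl⟩; exact ⟨⟨rfl, hb0⟩, rfl, hb0⟩
    · rw [if_neg h]
      refine double_sum_neg _ _ fun b c => ?_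
      rintro ⟨⟨h1, h2⟩, h3, h4⟩
      have ha : a = a' := (hK.2 b).1 (h1.trans h3.symm)
      subst ha
      exact h ⟨rfl, h2.symm.trans h4⟩
  · -- parties {2,3}
    intro b c b' c'
    simp only [hterm]
    by_cases h : b = b' ∧ c = c'
    · obtain ⟨rfl, rfl⟩ := h
      rw [if_pos ⟨rfl, rfl⟩]
      set a0 := (Equiv.ofBijective (fun i => K i b) (hK.2 b)).symm c with ha0def
      have ha0 : K a0 b = c := (Equiv.ofBijective (fun i => K i b) (hK.2 b)).apply_symm_apply c
      refine double_sum_pos _ _ a0 (L a0 b) fun a e => ?_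
      constructor
      · rintro ⟨⟨h1, h2⟩, -⟩
        have ha : a = a0 := (bij_eq_iff (hK.2 b) c a).mp h1
        subst ha; exact ⟨rfl, h2.symm⟩
      · rintro ⟨rfl, rfl⟩; exact ⟨⟨ha0, rfl⟩, ha0, rfl⟩
    · rw [if_neg h]
      refine double_sum_neg _ _ fun a e => ?_
      rintro ⟨⟨h1, h2⟩, h3, h4⟩
      have hb : b = b' := (hL.1 a).1 (h2.trans h4.symm)
      subst hb
      exact h ⟨rfl, h1.symm.trans h3⟩
  · -- parties {2,4}
    intro b e b' e'
    simp only [hterm]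
    by_cases h : b = b' ∧ e = e'
    · obtain ⟨rfl, rfl⟩ := h
      rw [if_pos ⟨rfl, rfl⟩]
      set a0 := (Equiv.ofBijective (fun i => L i b) (hL.2 b)).symm e with ha0def
      have ha0 : L a0 b = e := (Equiv.ofBijective (fun i => L i b) (hL.2 b)).apply_symm_apply e
      refine double_sum_pos _ _ a0 (K a0 b) fun a c => ?_
      constructor
      · rintro ⟨⟨h1, h2⟩, -⟩
        have ha : a = a0 := (bij_eq_iff (hL.2 b) e a).mp h2
        subst ha; exact ⟨rfl, h1.symm⟩
      · rintro ⟨rfl, rfl⟩; exact ⟨⟨rfl, ha0⟩, rfl, ha0⟩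
    · rw [if_neg h]
      refine double_sum_neg _ _ fun a c => ?_
      rintro ⟨⟨h1, h2⟩, h3, h4⟩
      have hb : b = b' := (hK.1 a).1 (h1.trans h3.symm)
      subst hb
      exact h ⟨rfl, h2.symm.trans h4⟩
  · -- parties {3,4}
    intro c e c' e'
    simp only [hterm]
    have hbij : Function.Bijective (fun p : Fin d × Fin d => (K p.1 p.2, L p.1 p.2)) :=
      (Finite.injective_iff_bijective).mp hKL
    by_cases h : c = c' ∧ e = e'
    · obtain ⟨rfl, rfl⟩ := h
      rw [if_pos ⟨rfl, rfl⟩]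
      set p0 := (Equiv.ofBijective _ hbij).symm (c, e) with hp0def
      have hp0 : (K p0.1 p0.2, L p0.1 p0.2) = (c, e) :=
        (Equiv.ofBijective _ hbij).apply_symm_apply (c, e)
      rw [Prod.mk.injEq] at hp0
      refine double_sum_pos _ _ p0.1 p0.2 fun a b => ?_
      constructor
      · rintro ⟨⟨h1, h2⟩, -⟩
        have hp : (a, b) = p0 := (bij_eq_iff hbij (c, e) (a, b)).mp (by
          show (K a b, L a b) = (c, e)
          rw [h1, h2])
        rw [Prod.mk.injEq] at hp
        exact hp
      · rintro ⟨rfl, rfl⟩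
        exact ⟨⟨hp0.1, hp0.2⟩, hp0.1, hp0.2⟩
    · rw [if_neg h]
      refine double_sum_neg _ _ fun a b => ?_
      rintro ⟨⟨h1, h2⟩, h3, h4⟩
      exact h ⟨h1.symm.trans h3, h2.symm.trans h4⟩
end

section
/- Let U be a 2-unitary matrix on ℂ^d ⊗ ℂ^d and let |Ψ_U⟩ = (1/d) Σ U^{iα}_{jβ} |i⟩|α⟩|j⟩|β⟩ be its vectorization. Then |Ψ_U⟩ is a unit vector and every two-party reduced density matrix of |Ψ_U⟩ is maximally mixed; conversely, if |Ψ_U⟩ is an AME(4,d) state then U is 2-unitary. -/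
open Matrix Finset

local notation "conj" => starRingEnd ℂ

lemma isUnitary_iff_rows {n : Type*} [Fintype n] [DecidableEq n] (A : Matrix n n ℂ) :
    IsUnitary A ↔ ∀ x y, (∑ k, A x k * conj (A y k)) = if x = y then 1 else 0 := by
  rw [IsUnitary, Matrix.mem_unitaryGroup_iff, ← Matrix.ext_iff]
  refine forall₂_congr fun x y => ?_
  simp only [Matrix.mul_apply, Matrix.star_apply, Matrix.one_apply, starRingEnd_apply]

lemma isUnitary_iff_cols {n : Type*} [Fintype n] [DecidableEq n] (A : Matrix n n ℂ) :
    IsUnitary A ↔ ∀ x y, (∑ k, A k x * conj (A k y)) = if x = y then 1 else 0 := by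
  rw [IsUnitary, Matrix.mem_unitaryGroup_iff', ← Matrix.ext_iff]
  constructor
  · intro h x y
    have h' := h y x
    simp only [Matrix.mul_apply, Matrix.star_apply, Matrix.one_apply, starRingEnd_apply] at h' ⊢
    rw [show (∑ k, A k x * star (A k y)) = ∑ k, star (A k y) * A k x from
      Finset.sum_congr rfl fun k _ => mul_comm _ _, h']
    by_cases hxy : x = y
    · simp [hxy]
    · simp [hxy, Ne.symm hxy]
  · intro h x y
    have h' := h y x
    simp only [Matrix.mul_apply, Matrix.star_apply, Matrix.one_apply, starRingEnd_apply] at h' ⊢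
    rw [show (∑ k, star (A k x) * A k y) = ∑ k, A k y * star (A k x) from
      Finset.sum_congr rfl fun k _ => mul_comm _ _, h']
    by_cases hxy : x = y
    · simp [hxy]
    · simp [hxy, Ne.symm hxy]

lemma scaled_mul_conj (d : ℕ) (z w : ℂ) :
    ((1/(d:ℂ)) * z) * conj ((1/(d:ℂ)) * w) = (1/(d:ℂ)^2) * (z * conj w) := by
  have h : (starRingEnd ℂ) ((1/(d:ℂ)) * w) = (1/(d:ℂ)) * conj w := by
    rw [_root_.map_mul, map_div₀, _root_.map_one, Complex.conj_natCast]
  rw [h]; ring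

lemma ite_scale (c₀ : ℂ) (p : Prop) [Decidable p] :
    (if p then c₀ else 0) = c₀ * (if p then 1 else 0) := by split <;> simp

/-- `U` is 2-unitary iff its vectorization `|Ψ_U⟩ = (1/d) Σ U^{iα}_{jβ}|iαjβ⟩` is a
unit vector all of whose two-party reductions are maximally mixed (i.e. is AME(4,d)). -/
theorem two_unitary_iff_AME {d : ℕ} (hd : 0 < d)
    (U : Matrix (Fin d × Fin d) (Fin d × Fin d) ℂ)
    (ψ : Fin d → Fin d → Fin d → Fin d → ℂ)
    (hψ : ∀ i α j β, ψ i α j β = (1 / (d : ℂ)) * U (i, α) (j, β)) :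
    Is2Unitary U ↔
      ((∑ i, ∑ α, ∑ j, ∑ β, ψ i α j β * conj (ψ i α j β)) = 1 ∧
      (∀ a b a' b', (∑ c, ∑ e, ψ a b c e * conj (ψ a' b' c e)) =
        if a = a' ∧ b = b' then 1 / ((d : ℂ)^2) else 0) ∧
      (∀ a c a' c', (∑ b, ∑ e, ψ a b c e * conj (ψ a' b c' e)) =
        if a = a' ∧ c = c' then 1 / ((d : ℂ)^2) else 0) ∧
      (∀ a e a' e', (∑ b, ∑ c, ψ a b c e * conj (ψ a' b c e')) =
        if a = a' ∧ e = e' then 1 / ((d : ℂ)^2) else 0) ∧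
      (∀ b c b' c', (∑ a, ∑ e, ψ a b c e * conj (ψ a b' c' e)) =
        if b = b' ∧ c = c' then 1 / ((d : ℂ)^2) else 0) ∧
      (∀ b e b' e', (∑ a, ∑ c, ψ a b c e * conj (ψ a b' c e')) =
        if b = b' ∧ e = e' then 1 / ((d : ℂ)^2) else 0) ∧
      (∀ c e c' e', (∑ a, ∑ b, ψ a b c e * conj (ψ a b c' e')) =
        if c = c' ∧ e = e' then 1 / ((d : ℂ)^2) else 0)) := by
  have hd' : (d:ℂ) ≠ 0 := Nat.cast_ne_zero.mpr hd.ne'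
  have hne : (1/(d:ℂ)^2) ≠ 0 := one_div_ne_zero (pow_ne_zero 2 hd')
  -- computations relating the ψ-sums to matrix row/column inner products
  have compAB : ∀ a b a' b', (∑ c, ∑ e, ψ a b c e * conj (ψ a' b' c e)) =
      (1/(d:ℂ)^2) * ∑ k : Fin d × Fin d, U (a,b) k * conj (U (a',b') k) := by
    intro a b a' b'
    rw [Fintype.sum_prod_type, Finset.mul_sum]
    refine Finset.sum_congr rfl fun c _ => ?_
    rw [Finset.mul_sum]
    exact Finset.sum_congr rfl fun e _ => by rw [hψ, hψ, scaled_mul_conj]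
  have compCE : ∀ c e c' e', (∑ a, ∑ b, ψ a b c e * conj (ψ a b c' e')) =
      (1/(d:ℂ)^2) * ∑ k : Fin d × Fin d, U k (c,e) * conj (U k (c',e')) := by
    intro c e c' e'
    rw [Fintype.sum_prod_type, Finset.mul_sum]
    refine Finset.sum_congr rfl fun a _ => ?_
    rw [Finset.mul_sum]
    exact Finset.sum_congr rfl fun b _ => by rw [hψ, hψ, scaled_mul_conj]
  have compAC : ∀ a c a' c', (∑ b, ∑ e, ψ a b c e * conj (ψ a' b c' e)) =
      (1/(d:ℂ)^2) * ∑ k : Fin d × Fin d, realign U (a,c) k * conj (realign U (a',c') k) := by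
    intro a c a' c'
    rw [Fintype.sum_prod_type, Finset.mul_sum]
    refine Finset.sum_congr rfl fun b _ => ?_
    rw [Finset.mul_sum]
    exact Finset.sum_congr rfl fun e _ => by rw [hψ, hψ, scaled_mul_conj]; rfl
  have compBE : ∀ b e b' e', (∑ a, ∑ c, ψ a b c e * conj (ψ a b' c e')) =
      (1/(d:ℂ)^2) * ∑ k : Fin d × Fin d, realign U k (b,e) * conj (realign U k (b',e')) := by
    intro b e b' e'
    rw [Fintype.sum_prod_type, Finset.mul_sum]
    refine Finset.sum_congr rfl fun a _ => ?_
    rw [Finset.mul_sum]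
    exact Finset.sum_congr rfl fun c _ => by rw [hψ, hψ, scaled_mul_conj]; rfl
  have compAE : ∀ a e a' e', (∑ b, ∑ c, ψ a b c e * conj (ψ a' b c e')) =
      (1/(d:ℂ)^2) * ∑ k : Fin d × Fin d, ptrans U (a,e) k * conj (ptrans U (a',e') k) := by
    intro a e a' e'
    rw [Finset.sum_comm, Fintype.sum_prod_type, Finset.mul_sum]
    refine Finset.sum_congr rfl fun c _ => ?_
    rw [Finset.mul_sum]
    exact Finset.sum_congr rfl fun b _ => by rw [hψ, hψ, scaled_mul_conj]; rfl
  have compBC : ∀ b c b' c', (∑ a, ∑ e, ψ a b c e * conj (ψ a b' c' e)) =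
      (1/(d:ℂ)^2) * ∑ k : Fin d × Fin d, ptrans U k (c,b) * conj (ptrans U k (c',b')) := by
    intro b c b' c'
    rw [Fintype.sum_prod_type, Finset.mul_sum]
    refine Finset.sum_congr rfl fun a _ => ?_
    rw [Finset.mul_sum]
    exact Finset.sum_congr rfl fun e _ => by rw [hψ, hψ, scaled_mul_conj]; rfl
  -- the six equivalences
  have hAB : (∀ a b a' b', (∑ c, ∑ e, ψ a b c e * conj (ψ a' b' c e)) =
      if a = a' ∧ b = b' then 1 / ((d : ℂ)^2) else 0) ↔ IsUnitary U := by
    rw [isUnitary_iff_rows]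
    constructor
    · intro h x y
      have h' := h x.1 x.2 y.1 y.2
      rw [compAB, ite_scale, mul_right_inj' hne] at h'
      simpa [Prod.ext_iff] using h'
    · intro h a b a' b'
      rw [compAB, ite_scale, mul_right_inj' hne, h (a,b) (a',b')]
      simp [Prod.ext_iff]
  have hCE : (∀ c e c' e', (∑ a, ∑ b, ψ a b c e * conj (ψ a b c' e')) =
      if c = c' ∧ e = e' then 1 / ((d : ℂ)^2) else 0) ↔ IsUnitary U := by
    rw [isUnitary_iff_cols]
    constructor
    · intro h x y
      have h' := h x.1 x.2 y.1 y.2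
      rw [compCE, ite_scale, mul_right_inj' hne] at h'
      simpa [Prod.ext_iff] using h'
    · intro h c e c' e'
      rw [compCE, ite_scale, mul_right_inj' hne, h (c,e) (c',e')]
      simp [Prod.ext_iff]
  have hAC : (∀ a c a' c', (∑ b, ∑ e, ψ a b c e * conj (ψ a' b c' e)) =
      if a = a' ∧ c = c' then 1 / ((d : ℂ)^2) else 0) ↔ IsUnitary (realign U) := by
    rw [isUnitary_iff_rows]
    constructor
    · intro h x y
      have h' := h x.1 x.2 y.1 y.2
      rw [compAC, ite_scale, mul_right_inj' hne] at h'
      simpa [Prod.ext_iff] using h'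
    · intro h a c a' c'
      rw [compAC, ite_scale, mul_right_inj' hne, h (a,c) (a',c')]
      simp [Prod.ext_iff]
  have hBE : (∀ b e b' e', (∑ a, ∑ c, ψ a b c e * conj (ψ a b' c e')) =
      if b = b' ∧ e = e' then 1 / ((d : ℂ)^2) else 0) ↔ IsUnitary (realign U) := by
    rw [isUnitary_iff_cols]
    constructor
    · intro h x y
      have h' := h x.1 x.2 y.1 y.2
      rw [compBE, ite_scale, mul_right_inj' hne] at h'
      simpa [Prod.ext_iff] using h'
    · intro h b e b' e'
      rw [compBE, ite_scale, mul_right_inj' hne, h (b,e) (b',e')]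
      simp [Prod.ext_iff]
  have hAE : (∀ a e a' e', (∑ b, ∑ c, ψ a b c e * conj (ψ a' b c e')) =
      if a = a' ∧ e = e' then 1 / ((d : ℂ)^2) else 0) ↔ IsUnitary (ptrans U) := by
    rw [isUnitary_iff_rows]
    constructor
    · intro h x y
      have h' := h x.1 x.2 y.1 y.2
      rw [compAE, ite_scale, mul_right_inj' hne] at h'
      simpa [Prod.ext_iff] using h'
    · intro h a e a' e'
      rw [compAE, ite_scale, mul_right_inj' hne, h (a,e) (a',e')]
      simp [Prod.ext_iff]
  have hBC : (∀ b c b' c', (∑ a, ∑ e, ψ a b c e * conj (ψ a b' c' e)) =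
      if b = b' ∧ c = c' then 1 / ((d : ℂ)^2) else 0) ↔ IsUnitary (ptrans U) := by
    rw [isUnitary_iff_cols]
    constructor
    · intro h x y
      have h' := h x.2 x.1 y.2 y.1
      rw [compBC, ite_scale, mul_right_inj' hne] at h'
      have hgoal : (∑ k, ptrans U k x * conj (ptrans U k y)) =
          if x.2 = y.2 ∧ x.1 = y.1 then 1 else 0 := by simpa using h'
      rw [hgoal]
      by_cases hxy : x = y
      · simp [hxy]
      · have : ¬ (x.2 = y.2 ∧ x.1 = y.1) := by
          intro ⟨h1, h2⟩; exact hxy (Prod.ext h2 h1)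
        simp [hxy, this]
    · intro h b c b' c'
      rw [compBC, ite_scale, mul_right_inj' hne, h (c,b) (c',b')]
      simp [Prod.ext_iff, and_comm]
  -- the norm condition follows from unitarity of U
  have hnorm : IsUnitary U → (∑ i, ∑ α, ∑ j, ∑ β, ψ i α j β * conj (ψ i α j β)) = 1 := by
    intro hU
    have hrows := (isUnitary_iff_rows U).mp hU
    have hin : ∀ i α, (∑ j, ∑ β, ψ i α j β * conj (ψ i α j β)) = 1/(d:ℂ)^2 := by
      intro i α
      rw [compAB, hrows (i,α) (i,α), if_pos rfl, mul_one]
    calc (∑ i, ∑ α, ∑ j, ∑ β, ψ i α j β * conj (ψ i α j β))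
        = ∑ _i : Fin d, ∑ _α : Fin d, 1/(d:ℂ)^2 :=
          Finset.sum_congr rfl fun i _ => Finset.sum_congr rfl fun α _ => hin i α
      _ = 1 := by
          simp only [Finset.sum_const, Finset.card_univ, Fintype.card_fin, nsmul_eq_mul]
          field_simp
  constructor
  · rintro ⟨hU, hR, hG⟩
    exact ⟨hnorm hU, hAB.mpr hU, hAC.mpr hR, hAE.mpr hG, hBC.mpr hG, hBE.mpr hR, hCE.mpr hU⟩
  · rintro ⟨-, h2, h3, h4, -, -, -⟩
    exact ⟨hAB.mp h2, hAC.mp h3, hAE.mp h4⟩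
end

section
/- For any matrix A on ℂ^d ⊗ ℂ^d, any n ∈ ℕ, and any permutations σ, τ, ρ, λ ∈ S_n, the quantity A(σ,τ,ρ,λ) = Σ A^{i₁j₁}_{k₁l₁}⋯A^{iₙjₙ}_{kₙlₙ} (A†)^{k_{ρ(1)}l_{λ(1)}}_{i_{σ(1)}j_{τ(1)}} ⋯ (A†)^{k_{ρ(n)}l_{λ(n)}}_{i_{σ(n)}j_{τ(n)}} (sum over all repeated indices in {1,...,d}) is invariant under local unitary equivalence: if B = (u₁ ⊗ u₂) A (v₁ ⊗ v₂) with u₁,u₂,v₁,v₂ unitary, then B(σ,τ,ρ,λ) = A(σ,τ,ρ,λ). -/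
open Matrix Kronecker Finset

/-- The LU-invariant `A(σ,τ,ρ,λ)` built from `n` copies of `A` and `n` copies of `A†`,
contracted according to four permutations. -/
noncomputable def permInvariant {d n : ℕ}
    (A : Matrix (Fin d × Fin d) (Fin d × Fin d) ℂ)
    (σ τ ρ μ : Equiv.Perm (Fin n)) : ℂ :=
  ∑ i : Fin n → Fin d, ∑ j : Fin n → Fin d, ∑ k : Fin n → Fin d, ∑ l : Fin n → Fin d,
    (∏ m, A (i m, j m) (k m, l m)) *
      ∏ m, Aᴴ (k (ρ m), l (μ m)) (i (σ m), j (τ m))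

private lemma prod_sum1 {n d : ℕ} (f : Fin n → Fin d → ℂ) :
    ∏ m, ∑ x : Fin d, f m x = ∑ g : Fin n → Fin d, ∏ m, f m (g m) := by
  rw [Finset.prod_univ_sum, Fintype.piFinset_univ]

private lemma contract_row {d n : ℕ} {u : Matrix (Fin d) (Fin d) ℂ} (hu : IsUnitary u)
    (π : Equiv.Perm (Fin n)) (a a' : Fin n → Fin d) :
    ∑ i : Fin n → Fin d, (∏ m, u (i m) (a m)) * ∏ m, star (u (i (π m)) (a' m))
      = if a ∘ π = a' then 1 else 0 := by
  have hc : uᴴ * u = 1 := by simpa [Matrix.star_eq_conjTranspose] using hu.1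
  have h2 : ∀ i : Fin n → Fin d,
      ∏ m, star (u (i (π m)) (a' m)) = ∏ m, star (u (i m) (a' (π⁻¹ m))) := by
    intro i
    calc ∏ m, star (u (i (π m)) (a' m))
        = ∏ m, star (u (i (π m)) (a' (π⁻¹ (π m)))) := by simp
      _ = ∏ m, star (u (i m) (a' (π⁻¹ m))) :=
          Equiv.prod_comp π (fun m => star (u (i m) (a' (π⁻¹ m))))
  simp only [h2, ← Finset.prod_mul_distrib]
  rw [← prod_sum1 (fun m x => u x (a m) * star (u x (a' (π⁻¹ m))))]
  have h3 : ∀ m : Fin n, (∑ x, u x (a m) * star (u x (a' (π⁻¹ m))))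
      = if a' (π⁻¹ m) = a m then (1:ℂ) else 0 := by
    intro m
    have := congrFun (congrFun hc (a' (π⁻¹ m))) (a m)
    rw [Matrix.mul_apply] at this
    simp only [Matrix.conjTranspose_apply, Matrix.one_apply] at this
    rw [← this]
    exact Finset.sum_congr rfl fun x _ => mul_comm _ _
  simp only [h3]
  rw [Finset.prod_boole]
  congr 1
  simp only [eq_iff_iff, Finset.mem_univ, forall_const]
  constructor
  · intro h; funext m; have := h (π m); simpa using this.symm
  · intro h m; have := congrFun h (π⁻¹ m); simpa using this.symm

private lemma contract_col {d n : ℕ} {v : Matrix (Fin d) (Fin d) ℂ} (hv : IsUnitary v)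
    (π : Equiv.Perm (Fin n)) (c c' : Fin n → Fin d) :
    ∑ k : Fin n → Fin d, (∏ m, v (c m) (k m)) * ∏ m, star (v (c' m) (k (π m)))
      = if c ∘ π = c' then 1 else 0 := by
  have hc : v * vᴴ = 1 := by simpa [Matrix.star_eq_conjTranspose] using hv.2
  have h2 : ∀ k : Fin n → Fin d,
      ∏ m, star (v (c' m) (k (π m))) = ∏ m, star (v (c' (π⁻¹ m)) (k m)) := by
    intro k
    calc ∏ m, star (v (c' m) (k (π m)))
        = ∏ m, star (v (c' (π⁻¹ (π m))) (k (π m))) := by simp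
      _ = ∏ m, star (v (c' (π⁻¹ m)) (k m)) :=
          Equiv.prod_comp π (fun m => star (v (c' (π⁻¹ m)) (k m)))
  simp only [h2, ← Finset.prod_mul_distrib]
  rw [← prod_sum1 (fun m x => v (c m) x * star (v (c' (π⁻¹ m)) x))]
  have h3 : ∀ m : Fin n, (∑ x, v (c m) x * star (v (c' (π⁻¹ m)) x))
      = if c' (π⁻¹ m) = c m then (1:ℂ) else 0 := by
    intro m
    have := congrFun (congrFun hc (c m)) (c' (π⁻¹ m))
    rw [Matrix.mul_apply] at this
    simp only [Matrix.conjTranspose_apply, Matrix.one_apply] at this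
    rw [this]
    simp [eq_comm]
  simp only [h3]
  rw [Finset.prod_boole]
  congr 1
  simp only [eq_iff_iff, Finset.mem_univ, forall_const]
  constructor
  · intro h; funext m; have := h (π m); simpa using this.symm
  · intro h m; have := congrFun h (π⁻¹ m); simpa using this.symm

private lemma sum_rot3 {α : Type*} [Fintype α] (f : α → α → α → ℂ) :
    ∑ a, ∑ b, ∑ c, f a b c = ∑ b, ∑ c, ∑ a, f a b c := by
  rw [Finset.sum_comm]
  exact Finset.sum_congr rfl fun b _ => Finset.sum_comm

private lemma sum_rot4 {α : Type*} [Fintype α] (f : α → α → α → α → ℂ) :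
    ∑ a, ∑ b, ∑ c, ∑ e, f a b c e = ∑ b, ∑ c, ∑ e, ∑ a, f a b c e := by
  rw [Finset.sum_comm]
  exact Finset.sum_congr rfl fun b _ => sum_rot3 (fun a c e => f a b c e)

private lemma contract_sum_gen {d n : ℕ} (π : Equiv.Perm (Fin n))
    (F G : (Fin n → Fin d) → (Fin n → Fin d) → ℂ) (P Q : (Fin n → Fin d) → ℂ)
    (hcon : ∀ a a' : Fin n → Fin d,
      ∑ i : Fin n → Fin d, F i a * G i a' = if a ∘ π = a' then 1 else 0) :
    ∑ i : Fin n → Fin d,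
      (∑ a : Fin n → Fin d, F i a * P a) * (∑ a' : Fin n → Fin d, G i a' * Q a')
    = ∑ a : Fin n → Fin d, P a * Q (a ∘ π) := by
  simp only [Finset.sum_mul_sum]
  rw [Finset.sum_comm]
  calc ∑ a, ∑ i : Fin n → Fin d, ∑ a', (F i a * P a) * (G i a' * Q a')
      = ∑ a, ∑ a', (P a * Q a') * ∑ i : Fin n → Fin d, F i a * G i a' := by
        refine Finset.sum_congr rfl fun a _ => ?_
        rw [Finset.sum_comm]
        refine Finset.sum_congr rfl fun a' _ => ?_
        rw [Finset.mul_sum]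
        exact Finset.sum_congr rfl fun i _ => by ring
    _ = ∑ a, ∑ a', (P a * Q a') * if a ∘ π = a' then 1 else 0 := by
        simp only [hcon]
    _ = ∑ a, P a * Q (a ∘ π) := by
        simp only [mul_ite, mul_one, mul_zero, Finset.sum_ite_eq, Finset.mem_univ, if_true]

private lemma aux_L1 {d n : ℕ} {u : Matrix (Fin d) (Fin d) ℂ} (hu : IsUnitary u)
    (M : Matrix (Fin d × Fin d) (Fin d × Fin d) ℂ) (σ τ ρ μ : Equiv.Perm (Fin n)) :
    permInvariant ((u ⊗ₖ (1 : Matrix (Fin d) (Fin d) ℂ)) * M) σ τ ρ μ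
      = permInvariant M σ τ ρ μ := by
  have hB : ∀ (x₁ x₂ : Fin d) (w : Fin d × Fin d),
      ((u ⊗ₖ (1 : Matrix (Fin d) (Fin d) ℂ)) * M) (x₁, x₂) w = ∑ a, u x₁ a * M (a, x₂) w := by
    intro x₁ x₂ w
    rw [Matrix.mul_apply, Fintype.sum_prod_type]
    simp [Matrix.kroneckerMap_apply, Matrix.one_apply, ite_mul, mul_ite,
      Finset.sum_ite_eq, Finset.sum_ite_eq']
  have hBH : ∀ (z : Fin d × Fin d) (y₁ y₂ : Fin d),
      ((u ⊗ₖ (1 : Matrix (Fin d) (Fin d) ℂ)) * M)ᴴ z (y₁, y₂)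
        = ∑ a, star (u y₁ a) * Mᴴ z (a, y₂) := by
    intro z y₁ y₂
    rw [Matrix.conjTranspose_apply, hB, star_sum]
    exact Finset.sum_congr rfl fun a _ => by
      rw [star_mul', Matrix.conjTranspose_apply]
  unfold permInvariant
  have hP : ∀ i j k l : Fin n → Fin d,
      ∏ m, ((u ⊗ₖ (1 : Matrix (Fin d) (Fin d) ℂ)) * M) (i m, j m) (k m, l m)
        = ∑ a : Fin n → Fin d,
            (∏ m, u (i m) (a m)) * ∏ m, M (a m, j m) (k m, l m) := by
    intro i j k l
    simp only [hB]
    rw [prod_sum1 (fun m x => u (i m) x * M (x, j m) (k m, l m))]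
    exact Finset.sum_congr rfl fun a _ => Finset.prod_mul_distrib
  have hQ : ∀ i j k l : Fin n → Fin d,
      ∏ m, ((u ⊗ₖ (1 : Matrix (Fin d) (Fin d) ℂ)) * M)ᴴ (k (ρ m), l (μ m)) (i (σ m), j (τ m))
        = ∑ a' : Fin n → Fin d,
            (∏ m, star (u (i (σ m)) (a' m))) * ∏ m, Mᴴ (k (ρ m), l (μ m)) (a' m, j (τ m)) := by
    intro i j k l
    simp only [hBH]
    rw [prod_sum1 (fun m x => star (u (i (σ m)) x) * Mᴴ (k (ρ m), l (μ m)) (x, j (τ m)))]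
    exact Finset.sum_congr rfl fun a _ => Finset.prod_mul_distrib
  simp only [hP, hQ]
  conv_lhs => rw [sum_rot4]
  conv_rhs => rw [sum_rot4]
  refine Finset.sum_congr rfl fun j _ => Finset.sum_congr rfl fun k _ =>
    Finset.sum_congr rfl fun l _ => ?_
  exact contract_sum_gen σ (fun i a => ∏ m, u (i m) (a m))
      (fun i a' => ∏ m, star (u (i (σ m)) (a' m)))
      (fun a => ∏ m, M (a m, j m) (k m, l m))
      (fun a' => ∏ m, Mᴴ (k (ρ m), l (μ m)) (a' m, j (τ m)))
      (fun a a' => contract_row hu σ a a')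

private lemma aux_L2 {d n : ℕ} {u : Matrix (Fin d) (Fin d) ℂ} (hu : IsUnitary u)
    (M : Matrix (Fin d × Fin d) (Fin d × Fin d) ℂ) (σ τ ρ μ : Equiv.Perm (Fin n)) :
    permInvariant (((1 : Matrix (Fin d) (Fin d) ℂ) ⊗ₖ u) * M) σ τ ρ μ
      = permInvariant M σ τ ρ μ := by
  have hB : ∀ (x₁ x₂ : Fin d) (w : Fin d × Fin d),
      (((1 : Matrix (Fin d) (Fin d) ℂ) ⊗ₖ u) * M) (x₁, x₂) w = ∑ b, u x₂ b * M (x₁, b) w := by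
    intro x₁ x₂ w
    rw [Matrix.mul_apply, Fintype.sum_prod_type]
    simp [Matrix.kroneckerMap_apply, Matrix.one_apply, ite_mul, mul_ite,
      Finset.sum_ite_eq, Finset.sum_ite_eq']
  have hBH : ∀ (z : Fin d × Fin d) (y₁ y₂ : Fin d),
      (((1 : Matrix (Fin d) (Fin d) ℂ) ⊗ₖ u) * M)ᴴ z (y₁, y₂)
        = ∑ b, star (u y₂ b) * Mᴴ z (y₁, b) := by
    intro z y₁ y₂
    rw [Matrix.conjTranspose_apply, hB, star_sum]
    exact Finset.sum_congr rfl fun b _ => by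
      rw [star_mul', Matrix.conjTranspose_apply]
  unfold permInvariant
  have hP : ∀ i j k l : Fin n → Fin d,
      ∏ m, (((1 : Matrix (Fin d) (Fin d) ℂ) ⊗ₖ u) * M) (i m, j m) (k m, l m)
        = ∑ b : Fin n → Fin d,
            (∏ m, u (j m) (b m)) * ∏ m, M (i m, b m) (k m, l m) := by
    intro i j k l
    simp only [hB]
    rw [prod_sum1 (fun m x => u (j m) x * M (i m, x) (k m, l m))]
    exact Finset.sum_congr rfl fun b _ => Finset.prod_mul_distrib
  have hQ : ∀ i j k l : Fin n → Fin d,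
      ∏ m, (((1 : Matrix (Fin d) (Fin d) ℂ) ⊗ₖ u) * M)ᴴ (k (ρ m), l (μ m)) (i (σ m), j (τ m))
        = ∑ b' : Fin n → Fin d,
            (∏ m, star (u (j (τ m)) (b' m))) * ∏ m, Mᴴ (k (ρ m), l (μ m)) (i (σ m), b' m) := by
    intro i j k l
    simp only [hBH]
    rw [prod_sum1 (fun m x => star (u (j (τ m)) x) * Mᴴ (k (ρ m), l (μ m)) (i (σ m), x))]
    exact Finset.sum_congr rfl fun b _ => Finset.prod_mul_distrib
  simp only [hP, hQ]
  refine Finset.sum_congr rfl fun i _ => ?_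
  conv_lhs => rw [sum_rot3]
  conv_rhs => rw [sum_rot3]
  refine Finset.sum_congr rfl fun k _ => Finset.sum_congr rfl fun l _ => ?_
  exact contract_sum_gen τ (fun j b => ∏ m, u (j m) (b m))
      (fun j b' => ∏ m, star (u (j (τ m)) (b' m)))
      (fun b => ∏ m, M (i m, b m) (k m, l m))
      (fun b' => ∏ m, Mᴴ (k (ρ m), l (μ m)) (i (σ m), b' m))
      (fun b b' => contract_row hu τ b b')

private lemma aux_L3 {d n : ℕ} {v : Matrix (Fin d) (Fin d) ℂ} (hv : IsUnitary v)
    (M : Matrix (Fin d × Fin d) (Fin d × Fin d) ℂ) (σ τ ρ μ : Equiv.Perm (Fin n)) :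
    permInvariant (M * (v ⊗ₖ (1 : Matrix (Fin d) (Fin d) ℂ))) σ τ ρ μ
      = permInvariant M σ τ ρ μ := by
  have hB : ∀ (x : Fin d × Fin d) (w₁ w₂ : Fin d),
      (M * (v ⊗ₖ (1 : Matrix (Fin d) (Fin d) ℂ))) x (w₁, w₂) = ∑ c, M x (c, w₂) * v c w₁ := by
    intro x w₁ w₂
    rw [Matrix.mul_apply, Fintype.sum_prod_type]
    simp [Matrix.kroneckerMap_apply, Matrix.one_apply, ite_mul, mul_ite,
      Finset.sum_ite_eq, Finset.sum_ite_eq']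
  have hBH : ∀ (z₁ z₂ : Fin d) (y : Fin d × Fin d),
      (M * (v ⊗ₖ (1 : Matrix (Fin d) (Fin d) ℂ)))ᴴ (z₁, z₂) y
        = ∑ c, star (v c z₁) * Mᴴ (c, z₂) y := by
    intro z₁ z₂ y
    rw [Matrix.conjTranspose_apply, hB, star_sum]
    exact Finset.sum_congr rfl fun c _ => by
      rw [star_mul', Matrix.conjTranspose_apply, mul_comm]
  unfold permInvariant
  have hP : ∀ i j k l : Fin n → Fin d,
      ∏ m, (M * (v ⊗ₖ (1 : Matrix (Fin d) (Fin d) ℂ))) (i m, j m) (k m, l m)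
        = ∑ c : Fin n → Fin d,
            (∏ m, v (c m) (k m)) * ∏ m, M (i m, j m) (c m, l m) := by
    intro i j k l
    simp only [hB]
    rw [prod_sum1 (fun m x => M (i m, j m) (x, l m) * v x (k m))]
    exact Finset.sum_congr rfl fun c _ => by
      rw [Finset.prod_mul_distrib, mul_comm]
  have hQ : ∀ i j k l : Fin n → Fin d,
      ∏ m, (M * (v ⊗ₖ (1 : Matrix (Fin d) (Fin d) ℂ)))ᴴ (k (ρ m), l (μ m)) (i (σ m), j (τ m))
        = ∑ c' : Fin n → Fin d,
            (∏ m, star (v (c' m) (k (ρ m)))) * ∏ m, Mᴴ (c' m, l (μ m)) (i (σ m), j (τ m)) := by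
    intro i j k l
    simp only [hBH]
    rw [prod_sum1 (fun m x => star (v x (k (ρ m))) * Mᴴ (x, l (μ m)) (i (σ m), j (τ m)))]
    exact Finset.sum_congr rfl fun c _ => Finset.prod_mul_distrib
  simp only [hP, hQ]
  refine Finset.sum_congr rfl fun i _ => Finset.sum_congr rfl fun j _ => ?_
  rw [Finset.sum_comm]
  conv_rhs => rw [Finset.sum_comm]
  refine Finset.sum_congr rfl fun l _ => ?_
  exact contract_sum_gen ρ (fun k c => ∏ m, v (c m) (k m))
      (fun k c' => ∏ m, star (v (c' m) (k (ρ m))))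
      (fun c => ∏ m, M (i m, j m) (c m, l m))
      (fun c' => ∏ m, Mᴴ (c' m, l (μ m)) (i (σ m), j (τ m)))
      (fun c c' => contract_col hv ρ c c')

private lemma aux_L4 {d n : ℕ} {v : Matrix (Fin d) (Fin d) ℂ} (hv : IsUnitary v)
    (M : Matrix (Fin d × Fin d) (Fin d × Fin d) ℂ) (σ τ ρ μ : Equiv.Perm (Fin n)) :
    permInvariant (M * ((1 : Matrix (Fin d) (Fin d) ℂ) ⊗ₖ v)) σ τ ρ μ
      = permInvariant M σ τ ρ μ := by
  have hB : ∀ (x : Fin d × Fin d) (w₁ w₂ : Fin d),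
      (M * ((1 : Matrix (Fin d) (Fin d) ℂ) ⊗ₖ v)) x (w₁, w₂) = ∑ e, M x (w₁, e) * v e w₂ := by
    intro x w₁ w₂
    rw [Matrix.mul_apply, Fintype.sum_prod_type]
    simp [Matrix.kroneckerMap_apply, Matrix.one_apply, ite_mul, mul_ite,
      Finset.sum_ite_eq, Finset.sum_ite_eq']
  have hBH : ∀ (z₁ z₂ : Fin d) (y : Fin d × Fin d),
      (M * ((1 : Matrix (Fin d) (Fin d) ℂ) ⊗ₖ v))ᴴ (z₁, z₂) y
        = ∑ e, star (v e z₂) * Mᴴ (z₁, e) y := by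
    intro z₁ z₂ y
    rw [Matrix.conjTranspose_apply, hB, star_sum]
    exact Finset.sum_congr rfl fun e _ => by
      rw [star_mul', Matrix.conjTranspose_apply, mul_comm]
  unfold permInvariant
  have hP : ∀ i j k l : Fin n → Fin d,
      ∏ m, (M * ((1 : Matrix (Fin d) (Fin d) ℂ) ⊗ₖ v)) (i m, j m) (k m, l m)
        = ∑ e : Fin n → Fin d,
            (∏ m, v (e m) (l m)) * ∏ m, M (i m, j m) (k m, e m) := by
    intro i j k l
    simp only [hB]
    rw [prod_sum1 (fun m x => M (i m, j m) (k m, x) * v x (l m))]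
    exact Finset.sum_congr rfl fun e _ => by
      rw [Finset.prod_mul_distrib, mul_comm]
  have hQ : ∀ i j k l : Fin n → Fin d,
      ∏ m, (M * ((1 : Matrix (Fin d) (Fin d) ℂ) ⊗ₖ v))ᴴ (k (ρ m), l (μ m)) (i (σ m), j (τ m))
        = ∑ e' : Fin n → Fin d,
            (∏ m, star (v (e' m) (l (μ m)))) * ∏ m, Mᴴ (k (ρ m), e' m) (i (σ m), j (τ m)) := by
    intro i j k l
    simp only [hBH]
    rw [prod_sum1 (fun m x => star (v x (l (μ m))) * Mᴴ (k (ρ m), x) (i (σ m), j (τ m)))]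
    exact Finset.sum_congr rfl fun e _ => Finset.prod_mul_distrib
  simp only [hP, hQ]
  refine Finset.sum_congr rfl fun i _ => Finset.sum_congr rfl fun j _ =>
    Finset.sum_congr rfl fun k _ => ?_
  exact contract_sum_gen μ (fun l e => ∏ m, v (e m) (l m))
      (fun l e' => ∏ m, star (v (e' m) (l (μ m))))
      (fun e => ∏ m, M (i m, j m) (k m, e m))
      (fun e' => ∏ m, Mᴴ (k (ρ m), e' m) (i (σ m), j (τ m)))
      (fun e e' => contract_col hv μ e e')

/-- `A(σ,τ,ρ,λ)` is invariant under local unitary equivalence. -/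
theorem permInvariant_LU_invariant {d n : ℕ}
    (A : Matrix (Fin d × Fin d) (Fin d × Fin d) ℂ)
    (σ τ ρ μ : Equiv.Perm (Fin n))
    (u₁ u₂ v₁ v₂ : Matrix (Fin d) (Fin d) ℂ)
    (hu₁ : IsUnitary u₁) (hu₂ : IsUnitary u₂) (hv₁ : IsUnitary v₁) (hv₂ : IsUnitary v₂) :
    permInvariant ((u₁ ⊗ₖ u₂) * A * (v₁ ⊗ₖ v₂)) σ τ ρ μ = permInvariant A σ τ ρ μ := by
  have hdecomp : (u₁ ⊗ₖ u₂) * A * (v₁ ⊗ₖ v₂)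
      = (u₁ ⊗ₖ (1 : Matrix (Fin d) (Fin d) ℂ)) *
          (((1 : Matrix (Fin d) (Fin d) ℂ) ⊗ₖ u₂) *
            ((A * (v₁ ⊗ₖ (1 : Matrix (Fin d) (Fin d) ℂ))) *
              ((1 : Matrix (Fin d) (Fin d) ℂ) ⊗ₖ v₂))) := by
    have h1 : (u₁ ⊗ₖ u₂ : Matrix (Fin d × Fin d) (Fin d × Fin d) ℂ)
        = (u₁ ⊗ₖ (1 : Matrix (Fin d) (Fin d) ℂ)) * ((1 : Matrix (Fin d) (Fin d) ℂ) ⊗ₖ u₂) := by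
      rw [← Matrix.mul_kronecker_mul, mul_one, one_mul]
    have h2 : (v₁ ⊗ₖ v₂ : Matrix (Fin d × Fin d) (Fin d × Fin d) ℂ)
        = (v₁ ⊗ₖ (1 : Matrix (Fin d) (Fin d) ℂ)) * ((1 : Matrix (Fin d) (Fin d) ℂ) ⊗ₖ v₂) := by
      rw [← Matrix.mul_kronecker_mul, mul_one, one_mul]
    rw [h1, h2]
    simp only [Matrix.mul_assoc]
  rw [hdecomp, aux_L1 hu₁, aux_L2 hu₂, aux_L4 hv₂, aux_L3 hv₁]
end

section
/- For any bipartite unitary U on ℂ^d ⊗ ℂ^d, define L[U] = (S_{BD} ⊗ I_{AC})(U† ⊗ U†)(S_{BD} ⊗ I_{AC})(U ⊗ U) acting on (ℂ^d)^{⊗4} with U acting on parties (A,B) and (C,D), and S_{BD} the swap of parties B and D. Then Tr L[U] = Tr((U^R (U^R)†)²), where U^R is the realignment of U. -/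
open Matrix Kronecker

/-- The swap of tensor factors B and D in the ordering A⊗B⊗C⊗D, as a matrix. -/
noncomputable def swapBD (d : ℕ) :
    Matrix ((Fin d × Fin d) × (Fin d × Fin d)) ((Fin d × Fin d) × (Fin d × Fin d)) ℂ :=
  Matrix.of fun x y =>
    if x.1.1 = y.1.1 ∧ x.2.1 = y.2.1 ∧ x.1.2 = y.2.2 ∧ x.2.2 = y.1.2 then 1 else 0

/-- `L[U] = (S_BD ⊗ I_AC)(U† ⊗ U†)(S_BD ⊗ I_AC)(U ⊗ U)`. -/
noncomputable def LOp {d : ℕ} (U : Matrix (Fin d × Fin d) (Fin d × Fin d) ℂ) :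
    Matrix ((Fin d × Fin d) × (Fin d × Fin d)) ((Fin d × Fin d) × (Fin d × Fin d)) ℂ :=
  swapBD d * (Uᴴ ⊗ₖ Uᴴ) * swapBD d * (U ⊗ₖ U)

def sigmaBD {d : ℕ} (x : (Fin d × Fin d) × (Fin d × Fin d)) :
    (Fin d × Fin d) × (Fin d × Fin d) :=
  ((x.1.1, x.2.2), (x.2.1, x.1.2))

lemma swapBD_mul_apply {d : ℕ}
    (A : Matrix ((Fin d × Fin d) × (Fin d × Fin d)) ((Fin d × Fin d) × (Fin d × Fin d)) ℂ)
    (x y : (Fin d × Fin d) × (Fin d × Fin d)) :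
    (swapBD d * A) x y = A (sigmaBD x) y := by
  rw [Matrix.mul_apply]
  have h : ∀ z : (Fin d × Fin d) × (Fin d × Fin d),
      swapBD d x z = if z = sigmaBD x then 1 else 0 := by
    intro z
    simp only [swapBD, Matrix.of_apply, sigmaBD]
    congr 1
    apply propext
    constructor
    · rintro ⟨h1, h2, h3, h4⟩
      obtain ⟨⟨z1,z2⟩,⟨z3,z4⟩⟩ := z
      simp_all [Prod.ext_iff]
    · rintro rfl
      exact ⟨rfl, rfl, rfl, rfl⟩
  simp [h, ite_mul]

lemma swapBD_sum {d : ℕ}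
    (A : Matrix ((Fin d × Fin d) × (Fin d × Fin d)) ((Fin d × Fin d) × (Fin d × Fin d)) ℂ)
    (x y : (Fin d × Fin d) × (Fin d × Fin d)) :
    ∑ z, swapBD d x z * A z y = A (sigmaBD x) y :=
  (Matrix.mul_apply).symm.trans (swapBD_mul_apply A x y)

def shuffleBD {d : ℕ} :
    (((Fin d × Fin d) × (Fin d × Fin d)) × ((Fin d × Fin d) × (Fin d × Fin d))) ≃
    (((Fin d × Fin d) × (Fin d × Fin d)) × ((Fin d × Fin d) × (Fin d × Fin d))) where
  toFun t := (((t.2.1.1, t.1.1.1), (t.2.2.1, t.1.2.1)), ((t.2.2.2, t.1.1.2), (t.2.1.2, t.1.2.2)))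
  invFun s := (((s.1.1.2, s.2.1.2), (s.1.2.2, s.2.2.2)), ((s.1.1.1, s.2.2.1), (s.1.2.1, s.2.1.1)))
  left_inv := by rintro ⟨⟨⟨a,b⟩,⟨c,e⟩⟩,⟨⟨p,q⟩,⟨r,s⟩⟩⟩; rfl
  right_inv := by rintro ⟨⟨⟨v1,v2⟩,⟨w1,w2⟩⟩,⟨⟨u1,u2⟩,⟨u1',u2'⟩⟩⟩; rfl

noncomputable def Fterm {d : ℕ} (U : Matrix (Fin d × Fin d) (Fin d × Fin d) ℂ)
    (x z : (Fin d × Fin d) × (Fin d × Fin d)) : ℂ :=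
  (Uᴴ ⊗ₖ Uᴴ) (sigmaBD x) z * (U ⊗ₖ U) (sigmaBD z) x

noncomputable def Gterm {d : ℕ} (U : Matrix (Fin d × Fin d) (Fin d × Fin d) ℂ)
    (s : ((Fin d × Fin d) × (Fin d × Fin d)) × ((Fin d × Fin d) × (Fin d × Fin d))) : ℂ :=
  realign U s.1.1 s.2.1 * star (realign U s.1.2 s.2.1) *
    (realign U s.1.2 s.2.2 * star (realign U s.1.1 s.2.2))

/-- `Tr L[U] = Tr((U^R (U^R)†)²)`. -/
theorem trace_LOp_eq_realign_moment {d : ℕ}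
    (U : Matrix (Fin d × Fin d) (Fin d × Fin d) ℂ) (hU : IsUnitary U) :
    (LOp U).trace = ((realign U * (realign U)ᴴ) ^ 2).trace := by
  have hL : LOp U = (swapBD d * (Uᴴ ⊗ₖ Uᴴ)) * (swapBD d * (U ⊗ₖ U)) := by
    rw [LOp, mul_assoc]
  have key : ∀ t : ((Fin d × Fin d) × (Fin d × Fin d)) × ((Fin d × Fin d) × (Fin d × Fin d)),
      Fterm U t.1 t.2 = Gterm U (shuffleBD t) := by
    rintro ⟨⟨⟨a,b⟩,⟨c,e⟩⟩,⟨⟨p,q⟩,⟨r,s⟩⟩⟩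
    simp only [Fterm, Gterm, shuffleBD, Equiv.coe_fn_mk, sigmaBD, realign,
      Matrix.kroneckerMap_apply, Matrix.conjTranspose_apply, Matrix.of_apply,
      RCLike.star_def]
    ring
  calc (LOp U).trace
      = ∑ x : (Fin d × Fin d) × (Fin d × Fin d), ∑ z : (Fin d × Fin d) × (Fin d × Fin d),
          Fterm U x z := by
        rw [hL, Matrix.trace]
        simp only [Matrix.diag_apply, Matrix.mul_apply, swapBD_sum, Fterm]
    _ = ∑ t : (((Fin d × Fin d) × (Fin d × Fin d)) × ((Fin d × Fin d) × (Fin d × Fin d))),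
          Fterm U t.1 t.2 := (Fintype.sum_prod_type (f := fun t => Fterm U t.1 t.2)).symm
    _ = ∑ t : (((Fin d × Fin d) × (Fin d × Fin d)) × ((Fin d × Fin d) × (Fin d × Fin d))),
          Gterm U (shuffleBD t) := Finset.sum_congr rfl fun t _ => key t
    _ = ∑ s : (((Fin d × Fin d) × (Fin d × Fin d)) × ((Fin d × Fin d) × (Fin d × Fin d))),
          Gterm U s := Equiv.sum_comp shuffleBD (Gterm U)
    _ = ∑ s1 : (Fin d × Fin d) × (Fin d × Fin d), ∑ s2 : (Fin d × Fin d) × (Fin d × Fin d),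
          Gterm U (s1, s2) := Fintype.sum_prod_type (f := Gterm U)
    _ = ∑ x : Fin d × Fin d, ∑ z : Fin d × Fin d, ∑ s2 : (Fin d × Fin d) × (Fin d × Fin d),
          Gterm U ((x, z), s2) := Fintype.sum_prod_type (f := fun s1 => ∑ s2 : (Fin d × Fin d) × (Fin d × Fin d), Gterm U (s1, s2))
    _ = ((realign U * (realign U)ᴴ) ^ 2).trace := by
        rw [pow_two, Matrix.trace]
        simp only [Matrix.diag_apply, Matrix.mul_apply, Matrix.conjTranspose_apply]
        refine Finset.sum_congr rfl fun x _ => Finset.sum_congr rfl fun z _ => ?_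
        rw [Finset.sum_mul_sum, Fintype.sum_prod_type]
        rfl
end

section
/- For any bipartite unitary U on ℂ^d ⊗ ℂ^d and any k ≥ 1, the moment Tr L^k[U] is invariant under local unitary transformations: Tr L^k[(u₁⊗u₂)U(v₁⊗v₂)] = Tr L^k[U] for all d×d unitaries u₁,u₂,v₁,v₂. -/
open Matrix Kronecker

namespace LUaux

variable {d : ℕ}

/-- The underlying permutation of `swapBD`. -/
def sw (x : (Fin d × Fin d) × (Fin d × Fin d)) : (Fin d × Fin d) × (Fin d × Fin d) :=
  ((x.1.1, x.2.2), (x.2.1, x.1.2))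

lemma sw_sw (x : (Fin d × Fin d) × (Fin d × Fin d)) : sw (sw x) = x := rfl

lemma swapBD_apply (x y : (Fin d × Fin d) × (Fin d × Fin d)) :
    swapBD d x y = if y = sw x then 1 else 0 := by
  simp only [swapBD, Matrix.of_apply, sw, Prod.ext_iff]
  by_cases h1 : x.1.1 = y.1.1 <;> by_cases h2 : x.2.1 = y.2.1 <;>
    by_cases h3 : x.1.2 = y.2.2 <;> by_cases h4 : x.2.2 = y.1.2 <;>
    simp_all [eq_comm]

lemma swapBD_mul (M : Matrix ((Fin d × Fin d) × (Fin d × Fin d))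
    ((Fin d × Fin d) × (Fin d × Fin d)) ℂ) (x y) :
    (swapBD d * M) x y = M (sw x) y := by
  rw [Matrix.mul_apply]
  rw [Finset.sum_eq_single (sw x)]
  · rw [swapBD_apply]; simp
  · intro b _ hb; rw [swapBD_apply]; simp [hb]
  · intro h; exact absurd (Finset.mem_univ _) h

lemma mul_swapBD (M : Matrix ((Fin d × Fin d) × (Fin d × Fin d))
    ((Fin d × Fin d) × (Fin d × Fin d)) ℂ) (x y) :
    (M * swapBD d) x y = M x (sw y) := by
  rw [Matrix.mul_apply]
  rw [Finset.sum_eq_single (sw y)]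
  · rw [swapBD_apply, sw_sw]; simp
  · intro b _ hb
    rw [swapBD_apply]
    have : y ≠ sw b := fun h => hb (by rw [h, sw_sw])
    simp [this]
  · intro h; exact absurd (Finset.mem_univ _) h

/-- `swapBD` commutes with `(a ⊗ₖ b) ⊗ₖ (a ⊗ₖ b)`. -/
lemma swapBD_comm (a b : Matrix (Fin d) (Fin d) ℂ) :
    swapBD d * ((a ⊗ₖ b) ⊗ₖ (a ⊗ₖ b)) = ((a ⊗ₖ b) ⊗ₖ (a ⊗ₖ b)) * swapBD d := by
  ext x y
  rw [swapBD_mul, mul_swapBD]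
  simp only [Matrix.kroneckerMap_apply, sw]
  ring

lemma conj_pow (X L : Matrix ((Fin d × Fin d) × (Fin d × Fin d))
    ((Fin d × Fin d) × (Fin d × Fin d)) ℂ) (h1 : Xᴴ * X = 1) (h2 : X * Xᴴ = 1) (k : ℕ) :
    (Xᴴ * L * X) ^ k = Xᴴ * L ^ k * X := by
  induction k with
  | zero => simp [h1]
  | succ n ih =>
    rw [pow_succ, pow_succ, ih]
    calc Xᴴ * L ^ n * X * (Xᴴ * L * X) = Xᴴ * L ^ n * (X * Xᴴ) * L * X := by
          noncomm_ring
      _ = Xᴴ * (L ^ n * L) * X := by rw [h2]; noncomm_ring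

lemma kron_conjT {m n : ℕ} (A : Matrix (Fin m) (Fin m) ℂ) (B : Matrix (Fin n) (Fin n) ℂ) :
    (A ⊗ₖ B)ᴴ = Aᴴ ⊗ₖ Bᴴ := by
  ext x y
  simp [Matrix.conjTranspose_apply, Matrix.kroneckerMap_apply, star_mul']

lemma kron_conjT' {m : ℕ} (A B : Matrix (Fin m × Fin m) (Fin m × Fin m) ℂ) :
    (A ⊗ₖ B)ᴴ = Aᴴ ⊗ₖ Bᴴ := by
  ext x y
  simp [Matrix.conjTranspose_apply, Matrix.kroneckerMap_apply, star_mul']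

lemma unit_l {n : Type*} [Fintype n] [DecidableEq n] {A : Matrix n n ℂ}
    (h : IsUnitary A) : Aᴴ * A = 1 := by
  have := h.1
  rwa [← Matrix.star_eq_conjTranspose]

lemma unit_r {n : Type*} [Fintype n] [DecidableEq n] {A : Matrix n n ℂ}
    (h : IsUnitary A) : A * Aᴴ = 1 := by
  have := h.2
  rwa [← Matrix.star_eq_conjTranspose]

end LUaux

/-- `Tr L^k[U]` is invariant under local unitary transformations. -/
theorem trace_LOp_pow_LU_invariant {d : ℕ} (k : ℕ) (hk : 1 ≤ k)
    (U : Matrix (Fin d × Fin d) (Fin d × Fin d) ℂ) (hU : IsUnitary U)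
    (u₁ u₂ v₁ v₂ : Matrix (Fin d) (Fin d) ℂ)
    (hu₁ : IsUnitary u₁) (hu₂ : IsUnitary u₂) (hv₁ : IsUnitary v₁) (hv₂ : IsUnitary v₂) :
    ((LOp ((u₁ ⊗ₖ u₂) * U * (v₁ ⊗ₖ v₂))) ^ k).trace = ((LOp U) ^ k).trace := by
  set V := u₁ ⊗ₖ u₂ with hV
  set W := v₁ ⊗ₖ v₂ with hW
  have hVu : Vᴴ * V = 1 := by
    rw [hV, LUaux.kron_conjT, ← Matrix.mul_kronecker_mul,
      LUaux.unit_l hu₁, LUaux.unit_l hu₂, Matrix.one_kronecker_one]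
  have hWu : Wᴴ * W = 1 := by
    rw [hW, LUaux.kron_conjT, ← Matrix.mul_kronecker_mul,
      LUaux.unit_l hv₁, LUaux.unit_l hv₂, Matrix.one_kronecker_one]
  have hWu' : W * Wᴴ = 1 := by
    rw [hW, LUaux.kron_conjT, ← Matrix.mul_kronecker_mul,
      LUaux.unit_r hv₁, LUaux.unit_r hv₂, Matrix.one_kronecker_one]
  have hXu : (W ⊗ₖ W)ᴴ * (W ⊗ₖ W) = 1 := by
    rw [LUaux.kron_conjT', ← Matrix.mul_kronecker_mul, hWu,
      Matrix.one_kronecker_one]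
  have hXu' : (W ⊗ₖ W) * (W ⊗ₖ W)ᴴ = 1 := by
    rw [LUaux.kron_conjT', ← Matrix.mul_kronecker_mul, hWu',
      Matrix.one_kronecker_one]
  have hSV : swapBD d * (Vᴴ ⊗ₖ Vᴴ) = (Vᴴ ⊗ₖ Vᴴ) * swapBD d := by
    rw [hV, LUaux.kron_conjT]
    exact LUaux.swapBD_comm _ _
  have hSWH : swapBD d * (Wᴴ ⊗ₖ Wᴴ) = (Wᴴ ⊗ₖ Wᴴ) * swapBD d := by
    rw [hW, LUaux.kron_conjT]
    exact LUaux.swapBD_comm _ _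
  have hSW : swapBD d * (W ⊗ₖ W) = (W ⊗ₖ W) * swapBD d := by
    rw [hW]; exact LUaux.swapBD_comm _ _
  have key : LOp (V * U * W) = (W ⊗ₖ W)ᴴ * LOp U * (W ⊗ₖ W) := by
    have hconj : (V * U * W)ᴴ = Wᴴ * Uᴴ * Vᴴ := by
      rw [Matrix.conjTranspose_mul, Matrix.conjTranspose_mul]; noncomm_ring
    rw [LOp, LOp, hconj]
    rw [show (Wᴴ * Uᴴ * Vᴴ) ⊗ₖ (Wᴴ * Uᴴ * Vᴴ)
        = (Wᴴ ⊗ₖ Wᴴ) * (Uᴴ ⊗ₖ Uᴴ) * (Vᴴ ⊗ₖ Vᴴ) from by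
      rw [Matrix.mul_kronecker_mul, Matrix.mul_kronecker_mul]]
    rw [show (V * U * W) ⊗ₖ (V * U * W) = (V ⊗ₖ V) * (U ⊗ₖ U) * (W ⊗ₖ W) from by
      rw [Matrix.mul_kronecker_mul, Matrix.mul_kronecker_mul]]
    have hSVx : swapBD d * (V ⊗ₖ V) = (V ⊗ₖ V) * swapBD d := by
      rw [hV]; exact LUaux.swapBD_comm _ _
    have e1 : ∀ M, swapBD d * ((Wᴴ ⊗ₖ Wᴴ) * M) = (Wᴴ ⊗ₖ Wᴴ) * (swapBD d * M) := by
      intro M; rw [← Matrix.mul_assoc, hSWH, Matrix.mul_assoc]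
    have e0 : ∀ M, (Vᴴ ⊗ₖ Vᴴ) * ((V ⊗ₖ V) * M) = M := by
      intro M
      rw [← Matrix.mul_assoc, ← Matrix.mul_kronecker_mul, hVu, Matrix.one_kronecker_one,
        Matrix.one_mul]
    have e2 : ∀ M, (Vᴴ ⊗ₖ Vᴴ) * (swapBD d * ((V ⊗ₖ V) * M)) = swapBD d * M := by
      intro M
      rw [← Matrix.mul_assoc (swapBD d), hSVx, Matrix.mul_assoc, e0]
    rw [LUaux.kron_conjT']
    simp only [Matrix.mul_assoc]
    rw [e1, e2]
  rw [key, LUaux.conj_pow _ _ hXu hXu', Matrix.trace_mul_cycle, hXu', Matrix.one_mul]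
end

section
/- Let U₁ be a unitary matrix of order 9 on ℂ³ ⊗ ℂ³ satisfying U₁|1,1⟩ = |1,1⟩, written in block form as nine 3×3 blocks. If the realignment U₁^R is unitary, then the entire first block (rows 1–3, columns 1–3) is the matrix Diag(1,0,0) — i.e., all entries of the first block other than the (1,1) entry vanish — and in each of the remaining eight blocks the entries in the first row and the first column of the block vanish. -/
open Matrix

/-- For a unitary `U₁` of order 9 fixing `|1,1⟩` whose realignment is unitary:
the first 3×3 block equals `Diag(1,0,0)` and in every other block the element in the
first row and first column of the block vanishes. -/
theorem dual_unitary_block_structure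
    (U₁ : Matrix (Fin 3 × Fin 3) (Fin 3 × Fin 3) ℂ)
    (hU : IsUnitary U₁)
    (hfix : ∀ x : Fin 3 × Fin 3, U₁ x (0, 0) = if x = (0, 0) then 1 else 0)
    (hR : IsUnitary (realign U₁)) :
    (∀ α β : Fin 3, U₁ (0, α) (0, β) = if α = 0 ∧ β = 0 then 1 else 0) ∧
      (∀ i j : Fin 3, (i, j) ≠ ((0 : Fin 3), (0 : Fin 3)) → U₁ (i, 0) (j, 0) = 0) := by
  have hmem : realign U₁ * star (realign U₁) = 1 := (Matrix.mem_unitaryGroup_iff).mp hR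
  -- Row (0,0) of realign has norm 1
  have h00 : realign U₁ ((0 : Fin 3), (0 : Fin 3)) ((0 : Fin 3), (0 : Fin 3)) = 1 := by
    have := hfix ((0 : Fin 3), (0 : Fin 3))
    rw [if_pos rfl] at this
    exact this
  have hrow : ∀ z : Fin 3 × Fin 3, z ≠ ((0 : Fin 3), (0 : Fin 3)) →
      realign U₁ ((0 : Fin 3), (0 : Fin 3)) z = 0 := by
    have h := congrFun (congrFun hmem ((0 : Fin 3), (0 : Fin 3))) ((0 : Fin 3), (0 : Fin 3))
    rw [Matrix.mul_apply] at h
    simp only [Matrix.star_apply, Matrix.one_apply_eq] at h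
    have h' : (∑ z : Fin 3 × Fin 3,
        (Complex.normSq (realign U₁ ((0:Fin 3),(0:Fin 3)) z) : ℂ)) = 1 := by
      rw [← h]
      refine Finset.sum_congr rfl fun z _ => ?_
      rw [RCLike.star_def, Complex.mul_conj]
    have hsum : (∑ z : Fin 3 × Fin 3,
        Complex.normSq (realign U₁ ((0:Fin 3),(0:Fin 3)) z)) = 1 := by
      exact_mod_cast h'
    have hsplit := Finset.add_sum_erase Finset.univ
      (fun z => Complex.normSq (realign U₁ ((0:Fin 3),(0:Fin 3)) z))
      (Finset.mem_univ ((0:Fin 3),(0:Fin 3)))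
    rw [hsum] at hsplit
    simp only [h00, Complex.normSq_one] at hsplit
    have hz : (∑ z ∈ Finset.univ.erase ((0:Fin 3),(0:Fin 3)),
        Complex.normSq (realign U₁ ((0:Fin 3),(0:Fin 3)) z)) = 0 := by linarith
    intro z hzne
    have hnn : ∀ z ∈ Finset.univ.erase ((0:Fin 3),(0:Fin 3)),
        0 ≤ Complex.normSq (realign U₁ ((0:Fin 3),(0:Fin 3)) z) :=
      fun z _ => Complex.normSq_nonneg _
    have := (Finset.sum_eq_zero_iff_of_nonneg hnn).mp hz z
      (Finset.mem_erase.mpr ⟨hzne, Finset.mem_univ z⟩)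
    exact Complex.normSq_eq_zero.mp this
  constructor
  · intro α β
    by_cases hc : α = 0 ∧ β = 0
    · simp [hc.1, hc.2, ← h00, realign]
    · have : ((α, β) : Fin 3 × Fin 3) ≠ (0, 0) := by
        simp only [Prod.mk.injEq, ne_eq, not_and]
        intro ha hb; exact hc ⟨ha, hb⟩
      have := hrow (α, β) this
      simpa [realign, hc] using this
  · intro i j hij
    have h := congrFun (congrFun hmem (i, j)) ((0 : Fin 3), (0 : Fin 3))
    rw [Matrix.mul_apply] at h
    have hone : (1 : Matrix (Fin 3 × Fin 3) (Fin 3 × Fin 3) ℂ) (i,j) (0,0) = 0 :=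
      Matrix.one_apply_ne hij
    rw [hone] at h
    have hsingle : (∑ z : Fin 3 × Fin 3,
        realign U₁ (i,j) z * (star (realign U₁)) z ((0:Fin 3),(0:Fin 3)))
        = realign U₁ (i,j) ((0:Fin 3),(0:Fin 3)) := by
      rw [Finset.sum_eq_single ((0:Fin 3),(0:Fin 3))]
      · rw [Matrix.star_apply, h00, star_one, mul_one]
      · intro z _ hzne
        rw [Matrix.star_apply, hrow z hzne, star_zero, mul_zero]
      · simp
    rw [hsingle] at h
    exact h
end

section
/- Let U₄ be the matrix on ℂ³ ⊗ ℂ³ obtained from the permutation matrix P₉ by multiplying four of its unit entries by arbitrary phases α₁, α₂, α₃, α₄ of modulus 1 (at positions corresponding to basis transitions 32↦12, 22↦31, 23↦13, and 31↦33 in the pattern of Eq. U₄). Then there exist diagonal unitary matrices Φ₁, Φ₂, Φ₃, Φ₄ of order 3 such that (Φ₁ ⊗ Φ₂) U₄ (Φ₃ ⊗ Φ₄) = P₉. In particular, every enphasing of P₉ of this form is locally unitarily equivalent to P₉. -/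
open Matrix

/-- The image of `|j,β⟩` under the permutation taking
(11,12,13,21,22,23,31,32,33) to (11,23,32,33,12,21,22,31,13), 0-indexed. -/
def p9fun : Fin 3 → Fin 3 → Fin 3 × Fin 3 :=
  ![![(0, 0), (1, 2), (2, 1)],
    ![(2, 2), (0, 1), (1, 0)],
    ![(1, 1), (2, 0), (0, 2)]]

/-- The permutation matrix `P₉` on ℂ³ ⊗ ℂ³. -/
noncomputable def P₉ : Matrix (Fin 3 × Fin 3) (Fin 3 × Fin 3) ℂ :=
  Matrix.of fun x y => if x = p9fun y.1 y.2 then 1 else 0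

/-!
Diagonal local unitaries only rescale the nine nonzero entries of `U₄`, so the claim is a system
of nine multiplicative equations in the twelve diagonal entries of `Φ₁, Φ₂, Φ₃, Φ₄`. Its
solution involves each `αᵢ` with exponents `±1/3` (over `ℤ` the system has cokernel of order
`27`), so it is written with unit-modulus cube roots `βᵢ³ = αᵢ`.
-/

lemma Complex.exists_pow_eq_of_norm_eq_one {α : ℂ} (hα : ‖α‖ = 1) {n : ℕ} (hn : n ≠ 0) :
    ∃ β : ℂ, ‖β‖ = 1 ∧ β ^ n = α := by
  obtain ⟨β, hβ⟩ := IsAlgClosed.exists_pow_nat_eq α (Nat.pos_of_ne_zero hn)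
  refine ⟨β, (pow_eq_one_iff_of_nonneg (norm_nonneg β) hn).mp ?_, hβ⟩
  rw [← norm_pow, hβ, hα]

lemma Matrix.diagonal_mem_unitaryGroup {n 𝕜 : Type*} [Fintype n] [DecidableEq n] [RCLike 𝕜]
    {d : n → 𝕜} (hd : ∀ i, ‖d i‖ = 1) : diagonal d ∈ unitaryGroup n 𝕜 := by
  rw [mem_unitaryGroup_iff, star_eq_conjTranspose, diagonal_conjTranspose,
    diagonal_mul_diagonal, ← diagonal_one]
  congr 1
  funext i
  simp [RCLike.mul_conj, hd i]

lemma Matrix.diagonal_mul_mul_diagonal_eq {m n R : Type*} [Fintype m] [Fintype n]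
    [DecidableEq m] [DecidableEq n] [CommSemiring R] {P U : Matrix m n R} {a : m → R}
    {b : n → R} (φ : n → R) (hU : ∀ x y, U x y = φ y * P x y)
    (h : ∀ x y, P x y ≠ 0 → a x * φ y * b y = 1) :
    diagonal a * U * diagonal b = P := by
  ext x y
  rw [mul_diagonal, diagonal_mul, hU]
  by_cases hP : P x y = 0
  · simp [hP]
  · calc a x * (φ y * P x y) * b y = (a x * φ y * b y) * P x y := by ring
      _ = P x y := by rw [h x y hP, one_mul]

lemma P₉_apply_ne_zero {x y : Fin 3 × Fin 3} (h : P₉ x y ≠ 0) : x = p9fun y.1 y.2 := by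
  by_contra hx
  exact h (by simp [P₉, hx])

/-- The phase that `U₄` puts on the column `y` of `P₉`. -/
def p9Phase (α₁ α₂ α₃ α₄ : ℂ) (y : Fin 3 × Fin 3) : ℂ :=
  if y = ((0 : Fin 3), (1 : Fin 3)) then α₁
  else if y = ((2 : Fin 3), (0 : Fin 3)) then α₂
  else if y = ((0 : Fin 3), (2 : Fin 3)) then α₃
  else if y = ((1 : Fin 3), (0 : Fin 3)) then α₄
  else 1

lemma exists_unimodular_solution_p9Phase {α₁ α₂ α₃ α₄ : ℂ}
    (h₁ : ‖α₁‖ = 1) (h₂ : ‖α₂‖ = 1) (h₃ : ‖α₃‖ = 1) (h₄ : ‖α₄‖ = 1) :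
    ∃ a b c d : Fin 3 → ℂ,
      (∀ i, ‖a i‖ = 1) ∧ (∀ i, ‖b i‖ = 1) ∧ (∀ i, ‖c i‖ = 1) ∧ (∀ i, ‖d i‖ = 1) ∧
      ∀ y : Fin 3 × Fin 3, a (p9fun y.1 y.2).1 * b (p9fun y.1 y.2).2 *
        p9Phase α₁ α₂ α₃ α₄ y * (c y.1 * d y.2) = 1 := by
  obtain ⟨β₁, hβ₁, rfl⟩ := Complex.exists_pow_eq_of_norm_eq_one h₁ three_ne_zero
  obtain ⟨β₂, hβ₂, rfl⟩ := Complex.exists_pow_eq_of_norm_eq_one h₂ three_ne_zero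
  obtain ⟨β₃, hβ₃, rfl⟩ := Complex.exists_pow_eq_of_norm_eq_one h₃ three_ne_zero
  obtain ⟨β₄, hβ₄, rfl⟩ := Complex.exists_pow_eq_of_norm_eq_one h₄ three_ne_zero
  have hne : β₁ ≠ 0 ∧ β₂ ≠ 0 ∧ β₃ ≠ 0 ∧ β₄ ≠ 0 := by
    refine ⟨?_, ?_, ?_, ?_⟩ <;> rintro rfl <;> simp_all
  obtain ⟨hne₁, hne₂, hne₃, hne₄⟩ := hne
  refine ⟨![1, (β₁ * β₂)⁻¹, (β₃ * β₄)⁻¹], ![1, (β₂ * β₃)⁻¹, (β₁ * β₄)⁻¹],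
    ![1, β₁ * β₃ / β₄, β₁ * β₃ / β₂], ![1, β₂ * β₄ / β₁, β₂ * β₄ / β₃],
    ?_, ?_, ?_, ?_, ?_⟩
  rotate_right
  · rintro ⟨k, l⟩
    fin_cases k <;> fin_cases l <;> simp [p9Phase, p9fun] <;> field_simp
  all_goals intro i; fin_cases i <;> simp [hβ₁, hβ₂, hβ₃, hβ₄]

open Kronecker in
/-- The enphasing `U₄` of `P₉` with phases `α₁,α₂,α₃,α₄` (of modulus 1) placed on the
transitions 12↦23, 31↦22, 13↦32, 21↦33 is locally unitarily equivalent to `P₉` by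
diagonal local unitaries. -/
theorem enphased_P9_LU_equivalent (α₁ α₂ α₃ α₄ : ℂ)
    (h₁ : ‖α₁‖ = 1) (h₂ : ‖α₂‖ = 1)
    (h₃ : ‖α₃‖ = 1) (h₄ : ‖α₄‖ = 1)
    (U₄ : Matrix (Fin 3 × Fin 3) (Fin 3 × Fin 3) ℂ)
    (hU₄ : ∀ x y, U₄ x y =
      (if y = ((0 : Fin 3), (1 : Fin 3)) then α₁
        else if y = ((2 : Fin 3), (0 : Fin 3)) then α₂
        else if y = ((0 : Fin 3), (2 : Fin 3)) then α₃
        else if y = ((1 : Fin 3), (0 : Fin 3)) then α₄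
        else 1) * P₉ x y) :
    ∃ Φ₁ Φ₂ Φ₃ Φ₄ : Matrix (Fin 3) (Fin 3) ℂ,
      Φ₁.IsDiag ∧ Φ₂.IsDiag ∧ Φ₃.IsDiag ∧ Φ₄.IsDiag ∧
      IsUnitary Φ₁ ∧ IsUnitary Φ₂ ∧ IsUnitary Φ₃ ∧ IsUnitary Φ₄ ∧
      (Φ₁ ⊗ₖ Φ₂) * U₄ * (Φ₃ ⊗ₖ Φ₄) = P₉ := by
  obtain ⟨a, b, c, d, ha, hb, hc, hd, hsol⟩ := exists_unimodular_solution_p9Phase h₁ h₂ h₃ h₄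
  refine ⟨diagonal a, diagonal b, diagonal c, diagonal d,
    isDiag_diagonal a, isDiag_diagonal b, isDiag_diagonal c, isDiag_diagonal d,
    diagonal_mem_unitaryGroup ha, diagonal_mem_unitaryGroup hb,
    diagonal_mem_unitaryGroup hc, diagonal_mem_unitaryGroup hd, ?_⟩
  rw [diagonal_kronecker_diagonal, diagonal_kronecker_diagonal]
  refine diagonal_mul_mul_diagonal_eq (p9Phase α₁ α₂ α₃ α₄) hU₄ fun x y hxy => ?_
  obtain rfl := P₉_apply_ne_zero hxy
  exact hsol y
end

section
/- Let P₁₆ be the permutation matrix of order 16 on ℂ⁴ ⊗ ℂ⁴ mapping the lexicographically ordered basis pairs (11,12,13,14,21,...,44) to (11,44,22,33,43,12,34,21,24,31,13,42,32,23,41,14), and let P₁₆(θ) be obtained from P₁₆ by replacing its (11,11) entry 1 with e^{iθ}. Then Tr L²[P₁₆(θ)] = 8(29 + 3 cos θ). Consequently the matrices P₁₆(θ) for distinct θ ∈ (−π, π] generically have distinct values of this local-unitary invariant, so there are infinitely many local unitary equivalence classes among {P₁₆(θ)}. -/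
open Matrix Kronecker

/-- Local unitary equivalence of bipartite matrices. -/
def LUEquiv {d : ℕ} (A B : Matrix (Fin d × Fin d) (Fin d × Fin d) ℂ) : Prop :=
  ∃ u₁ u₂ v₁ v₂ : Matrix (Fin d) (Fin d) ℂ,
    IsUnitary u₁ ∧ IsUnitary u₂ ∧ IsUnitary v₁ ∧ IsUnitary v₂ ∧
    B = (u₁ ⊗ₖ u₂) * A * (v₁ ⊗ₖ v₂)

/-- The image of `|j,β⟩` under the permutation `P₁₆`, taking the lexicographically
ordered pairs (11,…,44) to (11,44,22,33,43,12,34,21,24,31,13,42,32,23,41,14). -/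
def p16fun : Fin 4 → Fin 4 → Fin 4 × Fin 4 :=
  ![![(0, 0), (3, 3), (1, 1), (2, 2)],
    ![(3, 2), (0, 1), (2, 3), (1, 0)],
    ![(1, 3), (2, 0), (0, 2), (3, 1)],
    ![(2, 1), (1, 2), (3, 0), (0, 3)]]

/-- `P₁₆(θ)`: the permutation matrix `P₁₆` with its `(11,11)` unit entry replaced
by `e^{iθ}`. -/
noncomputable def P16 (θ : ℝ) : Matrix (Fin 4 × Fin 4) (Fin 4 × Fin 4) ℂ :=
  Matrix.of fun x y =>
    (if y = ((0 : Fin 4), (0 : Fin 4)) then Complex.exp (θ * Complex.I) else 1) *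
      (if x = p16fun y.1 y.2 then 1 else 0)

/-! ### Auxiliary machinery: monomial matrices -/

noncomputable def mono {n : Type*} [DecidableEq n] (τ : n → n) (φ : n → ℂ) : Matrix n n ℂ :=
  Matrix.of fun x y => φ y * if x = τ y then 1 else 0

lemma mono_mul {n : Type*} [Fintype n] [DecidableEq n] (τ τ' : n → n) (φ φ' : n → ℂ) :
    mono τ φ * mono τ' φ' = mono (fun y => τ (τ' y)) (fun y => φ (τ' y) * φ' y) := by
  ext x y
  simp only [Matrix.mul_apply, mono, Matrix.of_apply]
  rw [Finset.sum_eq_single (τ' y)]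
  · simp [mul_assoc, mul_comm, mul_left_comm]
  · intro p _ hp
    simp [hp]
  · simp

lemma trace_mono {n : Type*} [Fintype n] [DecidableEq n] (τ : n → n) (φ : n → ℂ) :
    (mono τ φ).trace = ∑ y, if y = τ y then φ y else 0 := by
  simp [Matrix.trace, Matrix.diag, mono, mul_ite]

lemma mono_kron {n m : Type*} [DecidableEq n] [DecidableEq m]
    (τ : n → n) (φ : n → ℂ) (τ' : m → m) (φ' : m → ℂ) :
    (mono τ φ) ⊗ₖ (mono τ' φ') =
      mono (fun y => (τ y.1, τ' y.2)) (fun y => φ y.1 * φ' y.2) := by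
  ext x y
  simp only [Matrix.kroneckerMap_apply, mono, Matrix.of_apply]
  by_cases h1 : x.1 = τ y.1 <;> by_cases h2 : x.2 = τ' y.2 <;>
    simp [h1, h2, Prod.ext_iff] <;> ring

def sg : Fin 4 × Fin 4 → Fin 4 × Fin 4 := fun y => p16fun y.1 y.2

def sg' : Fin 4 × Fin 4 → Fin 4 × Fin 4 := fun y =>
  (![![(0, 0), (1, 1), (2, 2), (3, 3)],
     ![(1, 3), (0, 2), (3, 1), (2, 0)],
     ![(2, 1), (3, 0), (0, 3), (1, 2)],
     ![(3, 2), (2, 3), (1, 0), (0, 1)]] : Fin 4 → Fin 4 → Fin 4 × Fin 4) y.1 y.2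

lemma sg_sg' : ∀ t, sg (sg' t) = t ∧ sg' (sg t) = t := by decide

def sB : (Fin 4 × Fin 4) × (Fin 4 × Fin 4) → (Fin 4 × Fin 4) × (Fin 4 × Fin 4) :=
  fun y => ((y.1.1, y.2.2), (y.2.1, y.1.2))

lemma sB_invol : Function.Involutive sB := fun _ => rfl

noncomputable def czf (z : ℂ) : Fin 4 × Fin 4 → ℂ :=
  fun y => if y = ((0 : Fin 4), (0 : Fin 4)) then z else 1

lemma swapBD_eq : swapBD 4 = mono sB (fun _ => (1 : ℂ)) := by
  ext x y
  simp only [swapBD, mono, sB, Matrix.of_apply, one_mul]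
  refine if_congr ?_ rfl rfl
  obtain ⟨⟨a, b⟩, c, d⟩ := x
  obtain ⟨⟨e, f⟩, g, h⟩ := y
  simp only [Prod.ext_iff]
  tauto

lemma P16_eq (θ : ℝ) : P16 θ = mono sg (czf (Complex.exp (θ * Complex.I))) := rfl

lemma P16_conjT (θ : ℝ) :
    (P16 θ)ᴴ = mono sg' (czf (Complex.exp (-θ * Complex.I))) := by
  ext x y
  simp only [Matrix.conjTranspose_apply, P16, mono, czf, Matrix.of_apply, star_mul',
    apply_ite (star : ℂ → ℂ), star_one, star_zero]
  have hstar : star (Complex.exp ((θ : ℂ) * Complex.I)) = Complex.exp (-θ * Complex.I) := by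
    rw [Complex.star_def, ← Complex.exp_conj, _root_.map_mul, Complex.conj_ofReal,
      Complex.conj_I]
    ring_nf
  by_cases hx : x = sg' y
  · subst hx
    have h1 : y = sg (sg' y) := ((sg_sg' y).1).symm
    have h2 : (y = p16fun (sg' y).1 (sg' y).2) := h1
    have h3 : (sg' y = ((0 : Fin 4), (0 : Fin 4))) ↔ (y = ((0 : Fin 4), (0 : Fin 4))) := by
      constructor
      · intro h; rw [h1, h]; decide
      · intro h; rw [h]; decide
    rw [if_pos h2, if_pos rfl, mul_one, mul_one]
    by_cases hy : y = ((0 : Fin 4), (0 : Fin 4))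
    · rw [if_pos (h3.mpr hy), if_pos hy, hstar]
    · rw [if_neg (fun hh => hy (h3.mp hh)), if_neg hy]
  · have h4 : ¬ (y = p16fun x.1 x.2) := by
      intro h
      apply hx
      have := (sg_sg' x).2
      rw [show sg x = y from h.symm] at this
      exact this.symm
    rw [if_neg h4, if_neg hx, mul_zero, mul_zero]

/-- the permutation underlying `L[P₁₆(θ)]` -/
def Tf : (Fin 4 × Fin 4) × (Fin 4 × Fin 4) → (Fin 4 × Fin 4) × (Fin 4 × Fin 4) :=
  fun y => sB ((fun u => (sg' u.1, sg' u.2)) (sB ((fun u => (sg u.1, sg u.2)) y)))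

noncomputable def Phif (z w : ℂ) : (Fin 4 × Fin 4) × (Fin 4 × Fin 4) → ℂ :=
  fun y =>
    ((1 * ((fun u => czf w u.1 * czf w u.2) (sB ((fun u => (sg u.1, sg u.2)) y)))) * 1) *
      ((fun u => czf z u.1 * czf z u.2) y)

set_option maxHeartbeats 16000000 in
set_option maxRecDepth 20000 in
lemma key (z w : ℂ) (h : z * w = 1) :
    (∑ y : (Fin 4 × Fin 4) × (Fin 4 × Fin 4),
        if y = Tf (Tf y) then Phif z w (Tf y) * Phif z w y else 0) =
      232 + 12 * z + 12 * w := by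
  simp only [Fintype.sum_prod_type, Fin.sum_univ_four]
  simp only [Tf, Phif, czf, sB, sg, sg', p16fun, Matrix.cons_val_zero, Matrix.cons_val_one,
    Matrix.cons_val_two, Matrix.cons_val_three, Matrix.head_cons, Matrix.vecTail, Matrix.vecHead,
    Function.comp, Fin.succ, one_mul, mul_one,
    Prod.mk.injEq, and_true, true_and, and_false, false_and, if_true, if_false]
  simp (config := { decide := true }) only [and_self, and_true, true_and, and_false,
    false_and, if_true, if_false]
  linear_combination (49 + z * w + (z * w) ^ 2 + (z * w) ^ 3) * h

lemma trace_LOp_P16 (θ : ℝ) :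
    ((LOp (P16 θ)) ^ 2).trace =
      232 + 12 * Complex.exp (θ * Complex.I) + 12 * Complex.exp (-θ * Complex.I) := by
  have hzw : Complex.exp ((θ : ℂ) * Complex.I) * Complex.exp (-θ * Complex.I) = 1 := by
    rw [← Complex.exp_add, show (θ : ℂ) * Complex.I + -θ * Complex.I = 0 by ring,
      Complex.exp_zero]
  have hL : LOp (P16 θ) =
      mono Tf (Phif (Complex.exp (θ * Complex.I)) (Complex.exp (-θ * Complex.I))) := by
    rw [LOp, swapBD_eq, P16_conjT, P16_eq, mono_kron, mono_kron, mono_mul, mono_mul, mono_mul]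
    rfl
  rw [pow_two, hL, mono_mul, trace_mono]
  exact key _ _ hzw
section Part2

lemma kron_conjT {m n p q : Type*} (A : Matrix m n ℂ) (B : Matrix p q ℂ) :
    (A ⊗ₖ B)ᴴ = Aᴴ ⊗ₖ Bᴴ := by
  ext x y
  simp [Matrix.conjTranspose_apply, Matrix.kroneckerMap_apply, star_mul', mul_comm]

lemma mono_one_mul {n : Type*} [Fintype n] [DecidableEq n] {τ : n → n}
    (hτ : Function.Involutive τ) (M : Matrix n n ℂ) :
    mono τ (fun _ => 1) * M = Matrix.of (fun x y => M (τ x) y) := by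
  ext x y
  simp only [Matrix.mul_apply, mono, Matrix.of_apply, one_mul]
  rw [Finset.sum_eq_single (τ x)]
  · simp [hτ x]
  · intro p _ hp
    rw [if_neg, zero_mul]
    intro hc
    exact hp (by rw [hc, hτ p])
  · simp

lemma mul_mono_one {n : Type*} [Fintype n] [DecidableEq n] (τ : n → n) (M : Matrix n n ℂ) :
    M * mono τ (fun _ => 1) = Matrix.of (fun x y => M x (τ y)) := by
  ext x y
  simp only [Matrix.mul_apply, mono, Matrix.of_apply, one_mul]
  rw [Finset.sum_eq_single (τ y)]
  · simp
  · intro p _ hp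
    simp [hp]
  · simp

lemma S_comm (x₁ x₂ x₃ : Matrix (Fin 4) (Fin 4) ℂ) :
    swapBD 4 * ((x₁ ⊗ₖ x₂) ⊗ₖ (x₃ ⊗ₖ x₂)) = ((x₁ ⊗ₖ x₂) ⊗ₖ (x₃ ⊗ₖ x₂)) * swapBD 4 := by
  rw [swapBD_eq, mono_one_mul sB_invol, mul_mono_one]
  ext x y
  simp only [Matrix.of_apply, Matrix.kroneckerMap_apply, sB]
  ring

lemma kron4_cancel_left {u₁ u₂ : Matrix (Fin 4) (Fin 4) ℂ}
    (h₁ : IsUnitary u₁) (h₂ : IsUnitary u₂) :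
    ((u₁ᴴ ⊗ₖ u₂ᴴ) ⊗ₖ (u₁ᴴ ⊗ₖ u₂ᴴ)) * ((u₁ ⊗ₖ u₂) ⊗ₖ (u₁ ⊗ₖ u₂)) = 1 := by
  have e₁ : u₁ᴴ * u₁ = 1 := by
    have := (Matrix.mem_unitaryGroup_iff' (A := u₁)).mp h₁
    rwa [Matrix.star_eq_conjTranspose] at this
  have e₂ : u₂ᴴ * u₂ = 1 := by
    have := (Matrix.mem_unitaryGroup_iff' (A := u₂)).mp h₂
    rwa [Matrix.star_eq_conjTranspose] at this
  rw [← Matrix.mul_kronecker_mul, ← Matrix.mul_kronecker_mul, e₁, e₂,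
    Matrix.one_kronecker_one, Matrix.one_kronecker_one]

lemma kron4_cancel_right {u₁ u₂ : Matrix (Fin 4) (Fin 4) ℂ}
    (h₁ : IsUnitary u₁) (h₂ : IsUnitary u₂) :
    ((u₁ ⊗ₖ u₂) ⊗ₖ (u₁ ⊗ₖ u₂)) * ((u₁ᴴ ⊗ₖ u₂ᴴ) ⊗ₖ (u₁ᴴ ⊗ₖ u₂ᴴ)) = 1 := by
  have e₁ : u₁ * u₁ᴴ = 1 := by
    have := (Matrix.mem_unitaryGroup_iff (A := u₁)).mp h₁
    rwa [Matrix.star_eq_conjTranspose] at this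
  have e₂ : u₂ * u₂ᴴ = 1 := by
    have := (Matrix.mem_unitaryGroup_iff (A := u₂)).mp h₂
    rwa [Matrix.star_eq_conjTranspose] at this
  rw [← Matrix.mul_kronecker_mul, ← Matrix.mul_kronecker_mul, e₁, e₂,
    Matrix.one_kronecker_one, Matrix.one_kronecker_one]

lemma LOp_LU (A : Matrix (Fin 4 × Fin 4) (Fin 4 × Fin 4) ℂ)
    (u₁ u₂ v₁ v₂ : Matrix (Fin 4) (Fin 4) ℂ)
    (hu₁ : IsUnitary u₁) (hu₂ : IsUnitary u₂) :
    LOp ((u₁ ⊗ₖ u₂) * A * (v₁ ⊗ₖ v₂)) =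
      ((v₁ ⊗ₖ v₂) ⊗ₖ (v₁ ⊗ₖ v₂))ᴴ * LOp A * ((v₁ ⊗ₖ v₂) ⊗ₖ (v₁ ⊗ₖ v₂)) := by
  have csV : ∀ X, swapBD 4 * (((v₁ᴴ ⊗ₖ v₂ᴴ) ⊗ₖ (v₁ᴴ ⊗ₖ v₂ᴴ)) * X) =
      ((v₁ᴴ ⊗ₖ v₂ᴴ) ⊗ₖ (v₁ᴴ ⊗ₖ v₂ᴴ)) * (swapBD 4 * X) := by
    intro X
    rw [← Matrix.mul_assoc, S_comm, Matrix.mul_assoc]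
  have csU : ∀ X, swapBD 4 * (((u₁ ⊗ₖ u₂) ⊗ₖ (u₁ ⊗ₖ u₂)) * X) =
      ((u₁ ⊗ₖ u₂) ⊗ₖ (u₁ ⊗ₖ u₂)) * (swapBD 4 * X) := by
    intro X
    rw [← Matrix.mul_assoc, S_comm, Matrix.mul_assoc]
  rw [LOp, LOp]
  simp only [Matrix.conjTranspose_mul, kron_conjT, Matrix.mul_kronecker_mul, Matrix.mul_assoc]
  rw [csV, csU]
  rw [← Matrix.mul_assoc ((u₁ᴴ ⊗ₖ u₂ᴴ) ⊗ₖ (u₁ᴴ ⊗ₖ u₂ᴴ)) ((u₁ ⊗ₖ u₂) ⊗ₖ (u₁ ⊗ₖ u₂)),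
    kron4_cancel_left hu₁ hu₂, one_mul]

lemma trace_LU {A B : Matrix (Fin 4 × Fin 4) (Fin 4 × Fin 4) ℂ} (h : LUEquiv A B) :
    ((LOp B) ^ 2).trace = ((LOp A) ^ 2).trace := by
  obtain ⟨u₁, u₂, v₁, v₂, hu₁, hu₂, hv₁, hv₂, hB⟩ := h
  rw [hB, LOp_LU A u₁ u₂ v₁ v₂ hu₁ hu₂]
  set W := (v₁ ⊗ₖ v₂) ⊗ₖ (v₁ ⊗ₖ v₂) with hW
  have hWW : W * Wᴴ = 1 := by
    rw [hW, kron_conjT, kron_conjT]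
    exact kron4_cancel_right hv₁ hv₂
  have e : (Wᴴ * LOp A * W) ^ 2 = Wᴴ * ((LOp A * W) * (Wᴴ * (LOp A * W))) := by
    rw [pow_two]
    simp only [Matrix.mul_assoc]
  rw [e]
  rw [Matrix.trace_mul_comm]
  simp only [← Matrix.mul_assoc]
  rw [Matrix.mul_assoc (LOp A) W Wᴴ, hWW, Matrix.mul_one,
    Matrix.mul_assoc (LOp A * LOp A) W Wᴴ, hWW, Matrix.mul_one, pow_two]

end Part2

/-- `Tr L²[P₁₆(θ)] = 8(29 + 3 cos θ)`, and consequently there are infinitely many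
local unitary equivalence classes among the `P₁₆(θ)`. -/
theorem P16_invariant_value :
    (∀ θ : ℝ, ((LOp (P16 θ)) ^ 2).trace = ((8 * (29 + 3 * Real.cos θ) : ℝ) : ℂ)) ∧
    ∃ S : Set ℝ, S ⊆ Set.Ioc (-Real.pi) Real.pi ∧ S.Infinite ∧
      ∀ θ₁ ∈ S, ∀ θ₂ ∈ S, θ₁ ≠ θ₂ → ¬ LUEquiv (P16 θ₁) (P16 θ₂) := by
  have hval : ∀ θ : ℝ, ((LOp (P16 θ)) ^ 2).trace = ((8 * (29 + 3 * Real.cos θ) : ℝ) : ℂ) := by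
    intro θ
    rw [trace_LOp_P16]
    have h1 : Complex.exp ((θ : ℂ) * Complex.I) =
        Complex.cos θ + Complex.sin θ * Complex.I := by rw [Complex.exp_mul_I]
    have h2 : Complex.exp (-(θ : ℂ) * Complex.I) =
        Complex.cos θ - Complex.sin θ * Complex.I := by
      rw [show -(θ : ℂ) * Complex.I = (-θ : ℂ) * Complex.I by ring, Complex.exp_mul_I,
        Complex.cos_neg, Complex.sin_neg]
      ring
    rw [h1, h2]
    push_cast
    ring
  refine ⟨hval, Set.Ioo 0 Real.pi, ?_, Set.Ioo_infinite Real.pi_pos, ?_⟩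
  · intro θ hθ
    exact Set.mem_Ioc.mpr ⟨by linarith [Real.pi_pos, hθ.1], le_of_lt hθ.2⟩
  · intro θ₁ h1 θ₂ h2 hne hLU
    have ht := trace_LU hLU
    rw [hval θ₁, hval θ₂] at ht
    have hre : 8 * (29 + 3 * Real.cos θ₂) = 8 * (29 + 3 * Real.cos θ₁) := by
      exact_mod_cast ht
    have hcos : Real.cos θ₁ = Real.cos θ₂ := by linarith
    exact hne (Real.injOn_cos ⟨le_of_lt h1.1, le_of_lt h1.2⟩
      ⟨le_of_lt h2.1, le_of_lt h2.2⟩ hcos)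
end

section
/- The number of local unitary equivalence classes of 2-unitary matrices of order 16 on ℂ⁴ ⊗ ℂ⁴ is infinite: there exists a one-parameter family {U(θ) : θ ∈ (−π,π]} of 2-unitary matrices such that θ ↦ Tr L²[U(θ)] is a non-constant continuous function, and Tr L² is a local unitary invariant; hence uncountably many of the U(θ) are pairwise not LU-equivalent. -/
open Matrix Kronecker

/-!
Over GF(4) = {0, 1, ω, ω²}, the map (a, b) ↦ (a + b, a + ωb) has two orthogonal Latin squares
as coordinates, so its permutation matrix P₁₆, the realignment and the partial transpose of
P₁₆ are all permutation matrices; multiplying one entry by a phase e^{iθ} keeps all three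
unitary. For a monomial matrix U, L[U] is again monomial, so Tr L²[U] is a sum of products of
phases; for P₁₆(θ) the 256 terms are e^{ikθ} with k ∈ {-1, 0, 1}, occurring 12, 232 and 12
times, which gives 8(29 + 3 cos θ). Tr L² is an LU invariant because S_BD commutes with every
(x ⊗ y) ⊗ (x ⊗ y), so that L[(u₁ ⊗ u₂) U (v₁ ⊗ v₂)] is L[U] conjugated by the unitary
(v₁ ⊗ v₂) ⊗ (v₁ ⊗ v₂). As cos is injective on [0, π], the P₁₆(θ) with θ ∈ [0, π] are pairwise
LU-inequivalent.
-/

section MonomialMatrix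

variable {n m α : Type*} [DecidableEq n]

def monomialMatrix [Zero α] (σ : Equiv.Perm n) (φ : n → α) : Matrix n n α :=
  of fun i j => if j = σ i then φ i else 0

lemma monomialMatrix_mul [Fintype n] [NonUnitalNonAssocSemiring α] (σ τ : Equiv.Perm n)
    (φ ψ : n → α) :
    monomialMatrix σ φ * monomialMatrix τ ψ =
      monomialMatrix (σ.trans τ) fun i => φ i * ψ (σ i) := by
  ext i k
  simp only [monomialMatrix, mul_apply, of_apply, ite_mul, zero_mul]
  rw [Finset.sum_eq_single (σ i) (fun j _ hj => if_neg hj) (by simp)]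
  simp only [↓reduceIte, mul_ite, mul_zero, Equiv.trans_apply]
  rfl

lemma monomialMatrix_conjTranspose [AddMonoid α] [StarAddMonoid α] (σ : Equiv.Perm n)
    (φ : n → α) :
    (monomialMatrix σ φ)ᴴ = monomialMatrix σ.symm fun i => star (φ (σ.symm i)) := by
  ext i j
  simp only [conjTranspose_apply, monomialMatrix, of_apply]
  by_cases h : i = σ j
  · simp [h]
  · simp [h, Equiv.eq_symm_apply, Ne.symm h]

lemma monomialMatrix_kronecker [DecidableEq m] [MulZeroClass α] (σ : Equiv.Perm n)
    (τ : Equiv.Perm m) (φ : n → α) (ψ : m → α) :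
    monomialMatrix σ φ ⊗ₖ monomialMatrix τ ψ =
      monomialMatrix (σ.prodCongr τ) fun p => φ p.1 * ψ p.2 := by
  ext ⟨i, j⟩ ⟨k, l⟩
  simp only [kroneckerMap_apply, monomialMatrix, of_apply, Equiv.prodCongr_apply, Prod.map,
    Prod.mk.injEq]
  split_ifs <;> simp_all

lemma trace_monomialMatrix_sq [Fintype n] [Semiring α] {σ : Equiv.Perm n}
    (hσ : Function.Involutive σ) (φ : n → α) :
    (monomialMatrix σ φ ^ 2).trace = ∑ i, φ i * φ (σ i) := by
  rw [sq, monomialMatrix_mul]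
  simp [trace, monomialMatrix, hσ _]

lemma monomialMatrix_one_mul [Fintype n] [NonAssocSemiring α] (σ : Equiv.Perm n)
    (M : Matrix n n α) : monomialMatrix σ 1 * M = M.submatrix σ id := by
  ext i j
  simp [monomialMatrix, mul_apply]

lemma mul_monomialMatrix_one [Fintype n] [NonAssocSemiring α] (σ : Equiv.Perm n)
    (M : Matrix n n α) : M * monomialMatrix σ 1 = M.submatrix id σ.symm := by
  ext i j
  simp [monomialMatrix, mul_apply, ← Equiv.symm_apply_eq]

lemma monomialMatrix_mem_unitaryGroup [Fintype n] [CommRing α] [StarRing α] (σ : Equiv.Perm n)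
    {φ : n → α} (hφ : ∀ i, φ i ∈ unitary α) : monomialMatrix σ φ ∈ unitaryGroup n α := by
  rw [mem_unitaryGroup_iff, star_eq_conjTranspose, monomialMatrix_conjTranspose,
    monomialMatrix_mul]
  ext i j
  simp only [monomialMatrix, of_apply, Equiv.trans_apply, Equiv.symm_apply_apply, one_apply,
    Unitary.mul_star_self_of_mem (hφ i), eq_comm]

end MonomialMatrix

section TwoUnitary

variable {d : ℕ}

lemma realign_monomialMatrix {σ τ : Equiv.Perm (Fin d × Fin d)}
    (h : ∀ a b c e, (b, e) = σ (a, c) ↔ (c, e) = τ (a, b)) (φ : Fin d × Fin d → ℂ) :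
    realign (monomialMatrix σ φ) = monomialMatrix τ fun x => φ (x.1, (τ x).1) := by
  ext ⟨a, b⟩ ⟨c, e⟩
  simp only [realign, monomialMatrix, of_apply, h]
  split_ifs with hτ
  · rw [← hτ]
  · rfl

lemma ptrans_monomialMatrix {σ ρ : Equiv.Perm (Fin d × Fin d)}
    (h : ∀ a b c e, (c, b) = σ (a, e) ↔ (c, e) = ρ (a, b)) (φ : Fin d × Fin d → ℂ) :
    ptrans (monomialMatrix σ φ) = monomialMatrix ρ fun x => φ (x.1, (ρ x).2) := by
  ext ⟨a, b⟩ ⟨c, e⟩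
  simp only [ptrans, monomialMatrix, of_apply, h]
  split_ifs with hρ
  · rw [← hρ]
  · rfl

lemma is2Unitary_monomialMatrix {σ τ ρ : Equiv.Perm (Fin d × Fin d)}
    (hτ : ∀ a b c e, (b, e) = σ (a, c) ↔ (c, e) = τ (a, b))
    (hρ : ∀ a b c e, (c, b) = σ (a, e) ↔ (c, e) = ρ (a, b))
    {φ : Fin d × Fin d → ℂ} (hφ : ∀ i, φ i ∈ unitary ℂ) : Is2Unitary (monomialMatrix σ φ) := by
  refine ⟨monomialMatrix_mem_unitaryGroup σ hφ, ?_, ?_⟩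
  · rw [IsUnitary, realign_monomialMatrix hτ]
    exact monomialMatrix_mem_unitaryGroup τ fun _ => hφ _
  · rw [IsUnitary, ptrans_monomialMatrix hρ]
    exact monomialMatrix_mem_unitaryGroup ρ fun _ => hφ _

end TwoUnitary

section SwapBD

variable {d : ℕ}

def swapBDPerm (d : ℕ) : Equiv.Perm ((Fin d × Fin d) × (Fin d × Fin d)) where
  toFun x := ((x.1.1, x.2.2), (x.2.1, x.1.2))
  invFun x := ((x.1.1, x.2.2), (x.2.1, x.1.2))

lemma swapBD_eq_monomialMatrix (d : ℕ) : swapBD d = monomialMatrix (swapBDPerm d) 1 := by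
  ext ⟨⟨a, b⟩, ⟨c, e⟩⟩ ⟨⟨a', b'⟩, ⟨c', e'⟩⟩
  simp only [swapBD, monomialMatrix, swapBDPerm, of_apply, Equiv.coe_fn_mk, Prod.mk.injEq,
    Pi.one_apply]
  congr 1
  apply propext
  tauto

lemma commute_swapBD_kronecker (A B : Matrix (Fin d) (Fin d) ℂ) :
    Commute (swapBD d) ((A ⊗ₖ B) ⊗ₖ (A ⊗ₖ B)) := by
  rw [Commute, SemiconjBy, swapBD_eq_monomialMatrix, monomialMatrix_one_mul,
    mul_monomialMatrix_one]
  ext ⟨⟨a, b⟩, ⟨c, e⟩⟩ ⟨⟨a', b'⟩, ⟨c', e'⟩⟩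
  simp only [submatrix_apply, kroneckerMap_apply, swapBDPerm, Equiv.coe_fn_mk,
    Equiv.coe_fn_symm_mk, id]
  ring

end SwapBD

section LUInvariance

variable {d : ℕ}

lemma trace_sq_conj_of_mem_unitaryGroup {n α : Type*} [Fintype n] [DecidableEq n] [CommRing α]
    [StarRing α] {W : Matrix n n α} (hW : W ∈ unitaryGroup n α) (M : Matrix n n α) :
    ((Wᴴ * M * W) ^ 2).trace = (M ^ 2).trace := by
  have hWW : W * Wᴴ = 1 := mem_unitaryGroup_iff.1 hW
  have hsq : (Wᴴ * M * W) ^ 2 = Wᴴ * M ^ 2 * W := by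
    simp only [sq, mul_assoc, ← mul_assoc W, hWW, one_mul]
  rw [hsq, trace_mul_cycle, hWW, one_mul]

lemma LOp_kronecker_mul_mul (A : Matrix (Fin d × Fin d) (Fin d × Fin d) ℂ)
    {u₁ u₂ : Matrix (Fin d) (Fin d) ℂ} (hu₁ : IsUnitary u₁) (hu₂ : IsUnitary u₂)
    (v₁ v₂ : Matrix (Fin d) (Fin d) ℂ) :
    LOp ((u₁ ⊗ₖ u₂) * A * (v₁ ⊗ₖ v₂)) =
      ((v₁ ⊗ₖ v₂) ⊗ₖ (v₁ ⊗ₖ v₂))ᴴ * LOp A * ((v₁ ⊗ₖ v₂) ⊗ₖ (v₁ ⊗ₖ v₂)) := by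
  have hu := kronecker_mem_unitary hu₁ hu₂
  have huu := Unitary.star_mul_self_of_mem (kronecker_mem_unitary hu hu)
  simp only [star_eq_conjTranspose, conjTranspose_kronecker] at huu
  simp only [LOp, conjTranspose_mul, conjTranspose_kronecker, mul_kronecker_mul, mul_assoc]
  rw [(commute_swapBD_kronecker v₁ᴴ v₂ᴴ).left_comm,
    ← (commute_swapBD_kronecker u₁ᴴ u₂ᴴ).left_comm, ← mul_assoc _ ((u₁ ⊗ₖ u₂) ⊗ₖ (u₁ ⊗ₖ u₂)), huu,
    one_mul]

theorem LUEquiv.trace_LOp_sq_eq {A B : Matrix (Fin d × Fin d) (Fin d × Fin d) ℂ}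
    (h : LUEquiv A B) : ((LOp A) ^ 2).trace = ((LOp B) ^ 2).trace := by
  obtain ⟨u₁, u₂, v₁, v₂, hu₁, hu₂, hv₁, hv₂, rfl⟩ := h
  have hv := kronecker_mem_unitary hv₁ hv₂
  rw [LOp_kronecker_mul_mul A hu₁ hu₂,
    trace_sq_conj_of_mem_unitaryGroup (kronecker_mem_unitary hv hv)]

end LUInvariance

section LOperatorOfMonomial

variable {d : ℕ}

def lOpPerm (σ : Equiv.Perm (Fin d × Fin d)) : Equiv.Perm ((Fin d × Fin d) × (Fin d × Fin d)) :=
  (((swapBDPerm d).trans (σ.prodCongr σ).symm).trans (swapBDPerm d)).trans (σ.prodCongr σ)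

def lOpPhase (σ : Equiv.Perm (Fin d × Fin d)) (φ : Fin d × Fin d → ℂ)
    (x : (Fin d × Fin d) × (Fin d × Fin d)) : ℂ :=
  let a := σ.symm (x.1.1, x.2.2)
  let b := σ.symm (x.2.1, x.1.2)
  star (φ a * φ b) * (φ (a.1, b.2) * φ (b.1, a.2))

def lOpExponent (σ : Equiv.Perm (Fin d × Fin d)) (f : Fin d × Fin d → ℤ)
    (x : (Fin d × Fin d) × (Fin d × Fin d)) : ℤ :=
  let a := σ.symm (x.1.1, x.2.2)
  let b := σ.symm (x.2.1, x.1.2)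
  f (a.1, b.2) + f (b.1, a.2) - (f a + f b)

lemma LOp_monomialMatrix (σ : Equiv.Perm (Fin d × Fin d)) (φ : Fin d × Fin d → ℂ) :
    LOp (monomialMatrix σ φ) = monomialMatrix (lOpPerm σ) (lOpPhase σ φ) := by
  rw [LOp, ← conjTranspose_kronecker, monomialMatrix_kronecker, swapBD_eq_monomialMatrix,
    monomialMatrix_conjTranspose, monomialMatrix_mul, monomialMatrix_mul, monomialMatrix_mul]
  congr 1
  funext x
  simp [lOpPhase, swapBDPerm]

lemma lOpPhase_zpow {z : ℂ} (hz : z ∈ unitary ℂ) (σ : Equiv.Perm (Fin d × Fin d))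
    (f : Fin d × Fin d → ℤ) :
    lOpPhase σ (fun i => z ^ f i) = fun x => z ^ lOpExponent σ f x := by
  have hz₀ : z ≠ 0 := left_ne_zero_of_mul_eq_one (Unitary.mul_star_self_of_mem hz)
  have hstar : star z = z⁻¹ := eq_inv_of_mul_eq_one_left (Unitary.star_mul_self_of_mem hz)
  funext x
  simp only [lOpPhase, lOpExponent, ← zpow_add₀ hz₀, zpow_sub₀ hz₀, star_zpow₀, hstar,
    _root_.inv_zpow, div_eq_inv_mul]

lemma trace_LOp_monomialMatrix_zpow_sq {σ : Equiv.Perm (Fin d × Fin d)}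
    (hσ : Function.Involutive (lOpPerm σ)) {z : ℂ} (hz : z ∈ unitary ℂ)
    (f : Fin d × Fin d → ℤ) :
    ((LOp (monomialMatrix σ fun i => z ^ f i)) ^ 2).trace =
      ∑ x, z ^ (lOpExponent σ f x + lOpExponent σ f (lOpPerm σ x)) := by
  have hz₀ : z ≠ 0 := left_ne_zero_of_mul_eq_one (Unitary.mul_star_self_of_mem hz)
  simp only [LOp_monomialMatrix, lOpPhase_zpow hz, trace_monomialMatrix_sq hσ, zpow_add₀ hz₀]

end LOperatorOfMonomial

section EnphasedP16

open Finset

/-- `Fin 4` stands for GF(4) with 0, 1, 2, 3 read as 0, 1, ω, ω²: addition is `^^^` and this is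
multiplication by ω. -/
def mulOmega : Fin 4 → Fin 4 := ![0, 2, 3, 1]

def latinPerm : Equiv.Perm (Fin 4 × Fin 4) where
  toFun x := (x.1 ^^^ x.2, x.1 ^^^ mulOmega x.2)
  invFun y := (y.1 ^^^ mulOmega (y.1 ^^^ y.2), mulOmega (y.1 ^^^ y.2))
  left_inv := by decide
  right_inv := by decide

def latinRealignPerm : Equiv.Perm (Fin 4 × Fin 4) where
  toFun x := (x.1 ^^^ x.2, x.1 ^^^ mulOmega (x.1 ^^^ x.2))
  invFun y := (y.2 ^^^ mulOmega y.1, y.2 ^^^ mulOmega y.1 ^^^ y.1)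
  left_inv := by decide
  right_inv := by decide

def latinPtransPerm : Equiv.Perm (Fin 4 × Fin 4) where
  toFun x := (x.1 ^^^ mulOmega (mulOmega (x.1 ^^^ x.2)), mulOmega (mulOmega (x.1 ^^^ x.2)))
  invFun y := (y.1 ^^^ y.2, y.1 ^^^ y.2 ^^^ mulOmega y.2)
  left_inv := by decide
  right_inv := by decide

lemma latinPerm_realign_iff (a b c e : Fin 4) :
    (b, e) = latinPerm (a, c) ↔ (c, e) = latinRealignPerm (a, b) := by
  revert a b c e
  decide

lemma latinPerm_ptrans_iff (a b c e : Fin 4) :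
    (c, b) = latinPerm (a, e) ↔ (c, e) = latinPtransPerm (a, b) := by
  revert a b c e
  decide

set_option maxRecDepth 100000 in
lemma lOpPerm_latinPerm_involutive : Function.Involutive (lOpPerm latinPerm) := by
  unfold Function.Involutive
  decide

noncomputable def enphasedP16 (θ : ℝ) : Matrix (Fin 4 × Fin 4) (Fin 4 × Fin 4) ℂ :=
  monomialMatrix latinPerm (Pi.mulSingle 0 (Complex.exp (θ * Complex.I)))

lemma exp_ofReal_mul_I_mem_unitary (θ : ℝ) : Complex.exp (θ * Complex.I) ∈ unitary ℂ := by
  rw [Unitary.mem_iff_star_mul_self, Complex.star_def, ← Complex.exp_conj, ← Complex.exp_add]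
  simp

lemma enphasedP16_is2Unitary (θ : ℝ) : Is2Unitary (enphasedP16 θ) := by
  refine is2Unitary_monomialMatrix latinPerm_realign_iff latinPerm_ptrans_iff fun i => ?_
  rw [Pi.mulSingle_apply]
  split_ifs
  exacts [exp_ofReal_mul_I_mem_unitary θ, (unitary ℂ).one_mem]

lemma mulSingle_eq_zpow_single {ι G : Type*} [DecidableEq ι] [DivInvMonoid G] (i : ι) (z : G) :
    Pi.mulSingle i z = fun j => z ^ (Pi.single i 1 : ι → ℤ) j := by
  funext j
  by_cases h : j = i <;> simp [h]

def p16Exponent (x : (Fin 4 × Fin 4) × (Fin 4 × Fin 4)) : ℤ :=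
  lOpExponent latinPerm (Pi.single 0 1) x +
    lOpExponent latinPerm (Pi.single 0 1) (lOpPerm latinPerm x)

set_option maxRecDepth 100000 in
lemma p16Exponent_mem (x : (Fin 4 × Fin 4) × (Fin 4 × Fin 4)) :
    p16Exponent x ∈ ({-1, 0, 1} : Finset ℤ) := by
  revert x
  decide

lemma card_p16Exponent_eq_neg_one : #{x | p16Exponent x = -1} = 12 := by decide

set_option maxRecDepth 100000 in
lemma card_p16Exponent_eq_zero : #{x | p16Exponent x = 0} = 232 := by decide

lemma card_p16Exponent_eq_one : #{x | p16Exponent x = 1} = 12 := by decide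

lemma sum_zpow_p16Exponent (z : ℂ) :
    ∑ x, z ^ p16Exponent x = 232 + 12 * (z + z⁻¹) := by
  rw [← sum_fiberwise_of_maps_to fun x _ => p16Exponent_mem x]
  have hfiber (k : ℤ) :
      ∑ x with p16Exponent x = k, z ^ p16Exponent x = #{x | p16Exponent x = k} • z ^ k := by
    rw [← sum_const]
    exact sum_congr rfl fun x hx => by rw [(mem_filter.1 hx).2]
  rw [sum_insert (by decide), sum_insert (by decide), sum_singleton, hfiber, hfiber, hfiber,
    card_p16Exponent_eq_neg_one, card_p16Exponent_eq_zero, card_p16Exponent_eq_one]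
  norm_num
  ring

lemma trace_LOp_enphasedP16_sq (θ : ℝ) :
    ((LOp (enphasedP16 θ)) ^ 2).trace = (8 * (29 + 3 * Real.cos θ) : ℝ) := by
  rw [enphasedP16, mulSingle_eq_zpow_single, trace_LOp_monomialMatrix_zpow_sq
    lOpPerm_latinPerm_involutive (exp_ofReal_mul_I_mem_unitary θ)]
  refine (sum_zpow_p16Exponent _).trans ?_
  rw [← Complex.exp_neg, ← neg_mul]
  push_cast
  linear_combination (-12 : ℂ) * Complex.two_cos θ

end EnphasedP16

/-- There are infinitely many LU-equivalence classes of 2-unitary matrices of order 16: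
a one-parameter family of 2-unitaries on which the LU-invariant `Tr L²` is a
non-constant continuous function, so that uncountably many members are pairwise
LU-inequivalent. -/
theorem infinitely_many_LU_classes_d4 :
    ∃ U : ℝ → Matrix (Fin 4 × Fin 4) (Fin 4 × Fin 4) ℂ,
      (∀ θ ∈ Set.Ioc (-Real.pi) Real.pi, Is2Unitary (U θ)) ∧
      ContinuousOn (fun θ => ((LOp (U θ)) ^ 2).trace) (Set.Ioc (-Real.pi) Real.pi) ∧
      (∃ θ₁ ∈ Set.Ioc (-Real.pi) Real.pi, ∃ θ₂ ∈ Set.Ioc (-Real.pi) Real.pi,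
        ((LOp (U θ₁)) ^ 2).trace ≠ ((LOp (U θ₂)) ^ 2).trace) ∧
      (∀ A B : Matrix (Fin 4 × Fin 4) (Fin 4 × Fin 4) ℂ,
        LUEquiv A B → ((LOp A) ^ 2).trace = ((LOp B) ^ 2).trace) ∧
      ∃ S : Set ℝ, S ⊆ Set.Ioc (-Real.pi) Real.pi ∧ ¬ S.Countable ∧
        ∀ θ₁ ∈ S, ∀ θ₂ ∈ S, θ₁ ≠ θ₂ → ¬ LUEquiv (U θ₁) (U θ₂) := by
  have hπ := Real.pi_pos
  have hIcc : Set.Icc 0 Real.pi ⊆ Set.Ioc (-Real.pi) Real.pi :=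
    fun θ hθ => ⟨by linarith [hθ.1], hθ.2⟩
  refine ⟨enphasedP16, fun θ _ => enphasedP16_is2Unitary θ, ?_,
    ⟨0, hIcc ⟨le_rfl, hπ.le⟩, Real.pi, hIcc ⟨hπ.le, le_rfl⟩, ?_⟩,
    fun A B h => h.trace_LOp_sq_eq, Set.Icc 0 Real.pi, hIcc, by simpa using hπ, ?_⟩
  · simp_rw [trace_LOp_enphasedP16_sq]
    fun_prop
  · norm_num [trace_LOp_enphasedP16_sq]
  · intro θ₁ h₁ θ₂ h₂ hne hLU
    have htrace := hLU.trace_LOp_sq_eq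
    simp only [trace_LOp_enphasedP16_sq, Complex.ofReal_inj] at htrace
    exact hne (Real.injOn_cos h₁ h₂ (by linarith))
end
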